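/- arXiv:1505.06057 — 7 statements merged into one kernel-verified Lean document; each statement's English description precedes it below -/
import Mathlib

section
/- For any Q ∈ ℕ, the partial sum |∑_{d=1}^{Q} μ(d)/d| ≤ 1, where μ is the Möbius function. -/
/-!
Counting multiples gives `∑_{d ≤ Q} μ(d) ⌊Q/d⌋ = ∑_{m ≤ Q} ∑_{d ∣ m} μ(d) = 1`. Writing
`Q/d = ⌊Q/d⌋ + (Q mod d)/d` therefore turns `Q · ∑_{d ≤ Q} μ(d)/d` into `1` plus an error term
whose `d = 1` summand vanishes and whose other `Q - 1` summands have absolute value at most `1`.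
-/

open Finset ArithmeticFunction
open scoped ArithmeticFunction.Moebius

theorem card_filter_dvd_Icc_one (n d : ℕ) : #{m ∈ Icc 1 n | d ∣ m} = n / d := by
  rw [← zero_add 1, Icc_add_one_left_eq_Ioc, Nat.Ioc_filter_dvd_card_eq_div]

theorem sum_Icc_sum_divisors_eq_sum_Icc_div_smul {M : Type*} [AddCommMonoid M] (f : ℕ → M)
    (n : ℕ) : ∑ m ∈ Icc 1 n, ∑ d ∈ m.divisors, f d = ∑ d ∈ Icc 1 n, (n / d) • f d := by
  rw [sum_comm' (t' := Icc 1 n) (s' := fun d => {m ∈ Icc 1 n | d ∣ m})]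
  · simp_rw [sum_const, card_filter_dvd_Icc_one]
  · intro m d
    simp only [mem_Icc, mem_filter, Nat.mem_divisors]
    constructor
    · rintro ⟨⟨hm, hmn⟩, hdm, -⟩
      exact ⟨⟨⟨hm, hmn⟩, hdm⟩, Nat.pos_of_dvd_of_pos hdm hm, (Nat.le_of_dvd hm hdm).trans hmn⟩
    · rintro ⟨⟨⟨hm, hmn⟩, hdm⟩, -⟩
      exact ⟨⟨hm, hmn⟩, hdm, by omega⟩

theorem sum_divisors_moebius {R : Type*} [Ring R] (m : ℕ) :
    ∑ d ∈ m.divisors, ((μ d : ℤ) : R) = if m = 1 then 1 else 0 := by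
  have h := congrArg (fun f : ArithmeticFunction R => f m) (coe_moebius_mul_coe_zeta (R := R))
  simp only [coe_mul_zeta_apply, one_apply, intCoe_apply] at h
  exact h

theorem sum_Icc_div_mul_moebius {R : Type*} [Ring R] {n : ℕ} (hn : 1 ≤ n) :
    ∑ d ∈ Icc 1 n, ((n / d : ℕ) : R) * (μ d : ℤ) = 1 := by
  simp_rw [← nsmul_eq_mul, ← sum_Icc_sum_divisors_eq_sum_Icc_div_smul, sum_divisors_moebius]
  simp [hn]

theorem Nat.cast_div_eq_div_add_mod_div {K : Type*} [Semifield K] (m : ℕ) {n : ℕ}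
    (hn : (n : K) ≠ 0) : (m : K) / n = (m / n : ℕ) + (m % n : ℕ) / n := by
  conv_lhs => rw [← Nat.div_add_mod m n]
  push_cast
  rw [add_div, mul_div_cancel_left₀ _ hn]

theorem natCast_mul_sum_Icc_moebius_div {Q : ℕ} (hQ : 1 ≤ Q) :
    (Q : ℝ) * ∑ d ∈ Icc 1 Q, ((μ d : ℤ) : ℝ) / d
      = 1 + ∑ d ∈ Icc 1 Q, ((μ d : ℤ) : ℝ) * ((Q % d : ℕ) / d) := by
  rw [← sum_Icc_div_mul_moebius (R := ℝ) hQ, ← sum_add_distrib, mul_sum]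
  refine sum_congr rfl fun d hd => ?_
  have hd : (d : ℝ) ≠ 0 := Nat.cast_ne_zero.mpr (by simp only [mem_Icc] at hd; omega)
  rw [mul_div_left_comm, Nat.cast_div_eq_div_add_mod_div Q hd]
  ring

theorem abs_sum_Icc_moebius_mul_mod_div_le {Q : ℕ} (hQ : 1 ≤ Q) :
    |∑ d ∈ Icc 1 Q, ((μ d : ℤ) : ℝ) * ((Q % d : ℕ) / d)| ≤ Q - 1 := by
  rw [← insert_Icc_add_one_left_eq_Icc hQ, sum_insert (by simp), Nat.mod_one, Nat.cast_zero,
    zero_div, mul_zero, zero_add]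
  calc _ ≤ ∑ d ∈ Icc 2 Q, |((μ d : ℤ) : ℝ) * ((Q % d : ℕ) / d)| := abs_sum_le_sum_abs _ _
    _ ≤ ∑ d ∈ Icc 2 Q, (1 : ℝ) := by
        refine sum_le_sum fun d hd => ?_
        have hd : 0 < d := by simp only [mem_Icc] at hd; omega
        rw [abs_mul, ← one_mul 1]
        gcongr
        · exact_mod_cast abs_moebius_le_one
        · rw [abs_of_nonneg (by positivity), div_le_one (by positivity)]
          exact_mod_cast (Nat.mod_lt Q hd).le
    _ = Q - 1 := by
        rw [sum_const, Nat.card_Icc, nsmul_one, Nat.cast_sub (by omega)]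
        push_cast
        ring

theorem stmt2 (Q : ℕ) :
    |∑ d ∈ Finset.Icc 1 Q, ((ArithmeticFunction.moebius d : ℤ) : ℝ) / (d : ℝ)| ≤ 1 := by
  rcases Nat.eq_zero_or_pos Q with rfl | hQ
  · simp
  have hQ' : (0 : ℝ) < Q := by exact_mod_cast hQ
  refine le_of_mul_le_mul_left ?_ hQ'
  calc (Q : ℝ) * |∑ d ∈ Icc 1 Q, ((μ d : ℤ) : ℝ) / d|
      = |1 + ∑ d ∈ Icc 1 Q, ((μ d : ℤ) : ℝ) * ((Q % d : ℕ) / d)| := by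
        rw [← natCast_mul_sum_Icc_moebius_div hQ, abs_mul, abs_of_pos hQ']
    _ ≤ 1 + (Q - 1) := by
        grw [abs_add_le, abs_one, abs_sum_Icc_moebius_mul_mod_div_le hQ]
    _ = Q * 1 := by ring
end

section
/- For any γ ∈ (0,1) and any integer t ≥ 1, the absolute value of the generalized binomial coefficient |(γ)_t / t!| = ∏_{s=1}^{t} |(γ+1-s)/s| is at most e^{(γ+1)²}/(t+1)^{1+γ}. -/
/-!
For `s ≥ 2` the `s`-th factor is `1 - p / s` with `p = 1 + γ ∈ (1, 2)`, and Bernoulli's inequality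
gives `1 - p / s ≤ (s / (s + 1)) ^ p`. These bounds telescope, so the product of the factors
`s = 2, …, t` is at most `(2 / (t + 1)) ^ p`; the first factor is `γ ≤ 1`, and
`2 ^ p ≤ exp p ≤ exp (p ^ 2)`.
-/

open Finset Real

lemma one_sub_div_le_div_add_one_rpow {p m : ℝ} (hp : 1 ≤ p) (hm : 0 < m) :
    1 - p / m ≤ (m / (m + 1)) ^ p := by
  have hs : -1 ≤ -(1 / (m + 1)) := by
    rw [neg_le_neg_iff, div_le_one (by linarith)]
    linarith
  calc 1 - p / m ≤ 1 - p / (m + 1) := by gcongr; linarith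
    _ = 1 + p * -(1 / (m + 1)) := by ring
    _ ≤ (1 + -(1 / (m + 1))) ^ p := one_add_mul_self_le_rpow_one_add hs hp
    _ = (m / (m + 1)) ^ p := by
      congr 1
      field_simp
      ring

lemma prod_Ioc_one_sub_div_le_rpow {p : ℝ} {k n : ℕ} (hp : 1 ≤ p) (hpk : p ≤ k + 1)
    (hkn : k ≤ n) :
    ∏ s ∈ Ioc k n, (1 - p / s) ≤ ((k + 1) / (n + 1) : ℝ) ^ p := by
  induction n, hkn using Nat.le_induction with
  | base => simp [div_self (by positivity : (k : ℝ) + 1 ≠ 0)]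
  | succ n hkn ih =>
    have hn : (k : ℝ) ≤ n := by exact_mod_cast hkn
    rw [prod_Ioc_succ_top hkn]
    push_cast
    calc (∏ s ∈ Ioc k n, (1 - p / s)) * (1 - p / (n + 1))
        ≤ ((k + 1) / (n + 1) : ℝ) ^ p * ((n + 1) / (n + 1 + 1) : ℝ) ^ p := by
          refine mul_le_mul ih (one_sub_div_le_div_add_one_rpow hp (by positivity)) ?_
            (by positivity)
          rw [sub_nonneg, div_le_one (by positivity)]
          linarith
      _ = ((k + 1) / (n + 1 + 1) : ℝ) ^ p := by
          rw [← mul_rpow (by positivity) (by positivity)]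
          congr 1
          field_simp

lemma two_rpow_le_exp_sq {p : ℝ} (hp : 1 ≤ p) : (2 : ℝ) ^ p ≤ exp (p ^ 2) :=
  calc (2 : ℝ) ^ p ≤ exp 1 ^ p := by
        gcongr
        linarith [add_one_le_exp (1 : ℝ)]
    _ = exp p := exp_one_rpow p
    _ ≤ exp (p ^ 2) := by gcongr; nlinarith

theorem stmt3 (γ : ℝ) (hγ0 : 0 < γ) (hγ1 : γ < 1) (t : ℕ) (ht : 1 ≤ t) :
    ∏ s ∈ Finset.Icc 1 t, |(γ + 1 - (s : ℝ)) / (s : ℝ)| ≤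
      Real.exp ((γ + 1) ^ 2) / ((t : ℝ) + 1) ^ (1 + γ) := by
  have hfactor : ∀ s ∈ Ioc 1 t, |(γ + 1 - (s : ℝ)) / (s : ℝ)| = 1 - (1 + γ) / s := by
    intro s hs
    have hs2 : (2 : ℝ) ≤ s := by exact_mod_cast (mem_Ioc.mp hs).1
    rw [abs_div, abs_of_nonpos (by linarith), abs_of_pos (by linarith)]
    field_simp
    ring
  have htail : ∏ s ∈ Ioc 1 t, (1 - (1 + γ) / s) ≤ (2 / (t + 1) : ℝ) ^ (1 + γ) := by
    have := prod_Ioc_one_sub_div_le_rpow (p := 1 + γ) (by linarith) (by push_cast; linarith) ht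
    norm_num at this
    exact this
  rw [Icc_eq_cons_Ioc ht, prod_cons, prod_congr rfl hfactor]
  calc |(γ + 1 - ((1 : ℕ) : ℝ)) / ((1 : ℕ) : ℝ)| * ∏ s ∈ Ioc 1 t, (1 - (1 + γ) / s)
      ≤ 1 * (2 / (t + 1) : ℝ) ^ (1 + γ) := by
        refine mul_le_mul ?_ htail (prod_nonneg fun s hs => by rw [← hfactor s hs]; positivity)
          zero_le_one
        norm_num [abs_of_pos hγ0, hγ1.le]
    _ = (2 : ℝ) ^ (1 + γ) / ((t : ℝ) + 1) ^ (1 + γ) := by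
        rw [one_mul, div_rpow zero_le_two (by positivity)]
    _ ≤ exp ((γ + 1) ^ 2) / ((t : ℝ) + 1) ^ (1 + γ) := by
        rw [add_comm γ 1]
        gcongr
        exact two_rpow_le_exp_sq (by linarith)
end

section
/- Let n, m, p ∈ ℕ and let ψ: ℕ → ℝ_{>0} be a decreasing function. If ∑_{(a,b)∈ℕ²} ψ(h_{a,b})/h_{a,b}^{1−1/p} < ∞, where h_{a,b} = max(aⁿ, bᵐ), then the set W of (x,y) ∈ [0,1)² such that |aⁿx + bᵐy − cᵖ| < ψ(h_{a,b}) holds for infinitely many (a,b,c) ∈ ℕ² × ℤ_{≥0} has Lebesgue measure zero. -/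
/-!
For fixed `(a, b)` put `A = aⁿ`, `B = bᵐ`, `H = max A B`. Each condition
`|A x + B y - cᵖ| < ψ(H)` cuts out of the unit square a strip of measure at most `2ψ(H)/H`
(integrate along the coordinate whose coefficient is `H`), and it is non-empty only when
`cᵖ < A + B + ψ(H) ≤ (ψ(0) + 2) H`, i.e. for `O(H^{1/p})` values of `c`. So the points attached to
`(a, b)` form a set of measure `O(ψ(H) / H^{1-1/p})`, summable over `(a, b)`, and the
Borel–Cantelli lemma shows that almost every point lies in only finitely many of these sets.
Since `c ≤ cᵖ < A + B + ψ(H)`, each pair `(a, b)` contributes only finitely many triples.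
-/

open MeasureTheory Set

def unitSquareStrip (A B γ ε : ℝ) : Set (ℝ × ℝ) :=
  {xy | xy.1 ∈ Ico 0 1 ∧ xy.2 ∈ Ico 0 1 ∧ |A * xy.1 + B * xy.2 - γ| < ε}

lemma volume_unitSquareStrip_le_of_snd {A B γ ε : ℝ} (hB : 0 < B) :
    volume (unitSquareStrip A B γ ε) ≤ ENNReal.ofReal (2 * ε / B) := by
  have hsub : unitSquareStrip A B γ ε ⊆
      regionBetween (fun x => (γ - A * x - ε) / B) (fun x => (γ - A * x + ε) / B) (Ico 0 1) := by
    rintro ⟨x, y⟩ ⟨hx, -, hxy⟩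
    rw [abs_lt] at hxy
    refine ⟨hx, ?_, ?_⟩
    · rw [div_lt_iff₀ hB]; linarith
    · rw [lt_div_iff₀ hB]; linarith
  calc volume (unitSquareStrip A B γ ε) ≤ _ := measure_mono hsub
    _ = ∫⁻ _ in Ico (0 : ℝ) 1, ENNReal.ofReal (2 * ε / B) := by
      rw [Measure.volume_eq_prod, volume_regionBetween_eq_lintegral (by fun_prop) (by fun_prop)
        measurableSet_Ico]
      congr! 2 with x
      simp only [Pi.sub_apply]
      congr 1
      ring
    _ = ENNReal.ofReal (2 * ε / B) := by simp

lemma volume_unitSquareStrip_le_of_fst {A B γ ε : ℝ} (hA : 0 < A) :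
    volume (unitSquareStrip A B γ ε) ≤ ENNReal.ofReal (2 * ε / A) := by
  have hswap : unitSquareStrip A B γ ε = Prod.swap ⁻¹' unitSquareStrip B A γ ε := by
    ext ⟨x, y⟩
    simp only [unitSquareStrip, mem_preimage, mem_ofPred_eq, Prod.fst_swap, Prod.snd_swap,
      add_comm (A * x)]
    tauto
  have hmeas : MeasurableSet (unitSquareStrip B A γ ε) :=
    (measurable_fst measurableSet_Ico).inter ((measurable_snd measurableSet_Ico).inter
      (measurableSet_lt (f := fun xy : ℝ × ℝ => |B * xy.1 + A * xy.2 - γ|) (by fun_prop)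
      measurable_const))
  rw [hswap, Measure.volume_eq_prod, (Measure.measurePreserving_swap).measure_preimage
    hmeas.nullMeasurableSet, ← Measure.volume_eq_prod]
  exact volume_unitSquareStrip_le_of_snd hA

lemma volume_unitSquareStrip_le {A B γ ε : ℝ} (hAB : 0 < max A B) :
    volume (unitSquareStrip A B γ ε) ≤ ENNReal.ofReal (2 * ε / max A B) := by
  rcases max_cases A B with ⟨hmax, -⟩ | ⟨hmax, -⟩ <;> rw [hmax] at hAB ⊢
  · exact volume_unitSquareStrip_le_of_fst hAB
  · exact volume_unitSquareStrip_le_of_snd hAB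

lemma lt_add_of_mem_unitSquareStrip {A B γ ε : ℝ} {xy : ℝ × ℝ} (hA : 0 ≤ A) (hB : 0 ≤ B)
    (h : xy ∈ unitSquareStrip A B γ ε) : γ < A + B + ε := by
  obtain ⟨⟨hx0, hx1⟩, ⟨hy0, hy1⟩, hxy⟩ := h
  have : A * xy.1 ≤ A := mul_le_of_le_one_right hA hx1.le
  have : B * xy.2 ≤ B := mul_le_of_le_one_right hB hy1.le
  linarith [neg_abs_le (A * xy.1 + B * xy.2 - γ)]

lemma finite_setOf_mem_unitSquareStrip_pow {A B ε : ℝ} {p : ℕ} (hp : p ≠ 0) (hA : 0 ≤ A)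
    (hB : 0 ≤ B) (xy : ℝ × ℝ) :
    {c : ℕ | xy ∈ unitSquareStrip A B ((c : ℝ) ^ p) ε}.Finite := by
  refine (finite_Iio ⌈A + B + ε⌉₊).subset fun c hc => Nat.lt_ceil.2 ?_
  have hlt := lt_add_of_mem_unitSquareStrip hA hB hc
  have : (c : ℝ) ≤ (c : ℝ) ^ p := by
    rcases c.eq_zero_or_pos with rfl | hc0
    · simp
    · exact le_self_pow₀ (by exact_mod_cast hc0) hp
  linarith

lemma volume_iUnion_unitSquareStrip_pow_le {A B ε K : ℝ} {p : ℕ} (hp : p ≠ 0) (hA : 0 ≤ A)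
    (hB : 0 ≤ B) (hH : 1 ≤ max A B) (hε : 0 ≤ ε) (hεK : ε ≤ K) :
    volume (⋃ c : ℕ, unitSquareStrip A B ((c : ℝ) ^ p) ε) ≤
      ENNReal.ofReal (2 * (K + 3) * (ε / max A B ^ (1 - 1 / (p : ℝ)))) := by
  set H := max A B
  set u := H ^ (1 / (p : ℝ))
  have hH0 : 0 < H := by linarith
  have hu1 : 1 ≤ u := Real.one_le_rpow hH (by positivity)
  have hHu : u ^ p = H := by rw [← Real.rpow_inv_natCast_pow hH0.le hp, ← one_div]
  have hK : 0 ≤ K := hε.trans hεK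
  set N := ⌈(K + 2) * u⌉₊
  have hcount : ∀ c : ℕ, (unitSquareStrip A B ((c : ℝ) ^ p) ε).Nonempty → c < N := by
    rintro c ⟨xy, hxy⟩
    refine Nat.lt_ceil.2 (lt_of_pow_lt_pow_left₀ p (by positivity) ?_)
    calc (c : ℝ) ^ p < A + B + ε := lt_add_of_mem_unitSquareStrip hA hB hxy
      _ ≤ (K + 2) * H := by nlinarith [le_max_left A B, le_max_right A B]
      _ ≤ (K + 2) ^ p * u ^ p := by rw [hHu]; gcongr; exact le_self_pow₀ (by linarith) hp
      _ = ((K + 2) * u) ^ p := (mul_pow ..).symm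
  have hN : (N : ℝ) ≤ (K + 3) * u := by
    linarith [Nat.ceil_lt_add_one (show 0 ≤ (K + 2) * u by positivity)]
  have hHrpow : H ^ (1 - 1 / (p : ℝ)) = H / u := by rw [Real.rpow_sub hH0, Real.rpow_one]
  calc volume (⋃ c : ℕ, unitSquareStrip A B ((c : ℝ) ^ p) ε)
      ≤ volume (⋃ c ∈ Finset.range N, unitSquareStrip A B ((c : ℝ) ^ p) ε) :=
        measure_mono <| iUnion_subset fun c xy hxy =>
          mem_biUnion (Finset.mem_range.2 (hcount c ⟨xy, hxy⟩)) hxy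
    _ ≤ ∑ c ∈ Finset.range N, volume (unitSquareStrip A B ((c : ℝ) ^ p) ε) :=
        measure_biUnion_finset_le _ _
    _ ≤ ∑ _c ∈ Finset.range N, ENNReal.ofReal (2 * ε / H) :=
        Finset.sum_le_sum fun c _ => volume_unitSquareStrip_le hH0
    _ = ENNReal.ofReal (N * (2 * ε / H)) := by
        rw [Finset.sum_const, Finset.card_range, nsmul_eq_mul, ENNReal.ofReal_mul (by positivity),
          ENNReal.ofReal_natCast]
    _ ≤ ENNReal.ofReal (2 * (K + 3) * (ε / H ^ (1 - 1 / (p : ℝ)))) := by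
        refine ENNReal.ofReal_le_ofReal ?_
        rw [hHrpow, div_div_eq_mul_div]
        calc (N : ℝ) * (2 * ε / H) ≤ (K + 3) * u * (2 * ε / H) := by gcongr
          _ = 2 * (K + 3) * (ε * u / H) := by ring

/-- Indexed by `(a - 1, b - 1)`, so that the index set is all of `ℕ × ℕ`, as in the summability hypothesis. -/
def shiftedStrip (n m p : ℕ) (ψ : ℕ → ℝ) (ab : ℕ × ℕ) (c : ℕ) : Set (ℝ × ℝ) :=
  unitSquareStrip (((ab.1 + 1 : ℕ) : ℝ) ^ n) (((ab.2 + 1 : ℕ) : ℝ) ^ m) ((c : ℝ) ^ p)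
    (ψ (max ((ab.1 + 1) ^ n) ((ab.2 + 1) ^ m)))

lemma volume_iUnion_shiftedStrip_le {p : ℕ} (n m : ℕ) (hp : p ≠ 0) {ψ : ℕ → ℝ}
    (hψpos : ∀ q, 0 < ψ q) (hψanti : Antitone ψ) (ab : ℕ × ℕ) :
    volume (⋃ c, shiftedStrip n m p ψ ab c) ≤ ENNReal.ofReal (2 * (ψ 0 + 3) *
      (ψ (max ((ab.1 + 1) ^ n) ((ab.2 + 1) ^ m)) /
        ((max ((ab.1 + 1) ^ n) ((ab.2 + 1) ^ m) : ℕ) : ℝ) ^ (1 - 1 / (p : ℝ)))) := by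
  have hH : (1 : ℝ) ≤ max (((ab.1 + 1 : ℕ) : ℝ) ^ n) (((ab.2 + 1 : ℕ) : ℝ) ^ m) :=
    le_max_of_le_left (one_le_pow₀ (by simp))
  rw [Nat.cast_max, Nat.cast_pow, Nat.cast_pow]
  exact volume_iUnion_unitSquareStrip_pow_le hp (by positivity) (by positivity) hH
    (hψpos _).le (hψanti (Nat.zero_le _))

lemma infinite_setOf_mem_iUnion_shiftedStrip {p : ℕ} (n m : ℕ) (hp : p ≠ 0) (ψ : ℕ → ℝ)
    {xy : ℝ × ℝ} (hx : xy.1 ∈ Ico 0 1) (hy : xy.2 ∈ Ico 0 1)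
    (hinf : {abc : ℕ × ℕ × ℕ | 1 ≤ abc.1 ∧ 1 ≤ abc.2.1 ∧
        |(abc.1 : ℝ) ^ n * xy.1 + (abc.2.1 : ℝ) ^ m * xy.2 - (abc.2.2 : ℝ) ^ p| <
          ψ (max (abc.1 ^ n) (abc.2.1 ^ m))}.Infinite) :
    {ab | xy ∈ ⋃ c, shiftedStrip n m p ψ ab c}.Infinite := by
  have hfiber (ab : ℕ × ℕ) : {c | xy ∈ shiftedStrip n m p ψ ab c}.Finite :=
    finite_setOf_mem_unitSquareStrip_pow hp (by positivity) (by positivity) xy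
  refine fun hfin => hinf ((hfin.biUnion fun ab _ =>
    (hfiber ab).image fun c => (ab.1 + 1, ab.2 + 1, c)).subset ?_)
  rintro ⟨a, b, c⟩ ⟨ha, hb, habs⟩
  obtain ⟨a, rfl⟩ := Nat.exists_eq_add_one.2 ha
  obtain ⟨b, rfl⟩ := Nat.exists_eq_add_one.2 hb
  have hc : xy ∈ shiftedStrip n m p ψ (a, b) c := ⟨hx, hy, habs⟩
  exact mem_biUnion (x := (a, b)) (mem_iUnion.2 ⟨c, hc⟩) ⟨c, hc, rfl⟩

theorem stmt5_general (n m p : ℕ) (hp : 1 ≤ p)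
    (ψ : ℕ → ℝ) (hψpos : ∀ q, 0 < ψ q) (hψanti : Antitone ψ)
    (hsum : Summable (fun ab : ℕ × ℕ =>
      ψ (max ((ab.1 + 1) ^ n) ((ab.2 + 1) ^ m)) /
        ((max ((ab.1 + 1) ^ n) ((ab.2 + 1) ^ m) : ℕ) : ℝ) ^ (1 - 1 / (p : ℝ)))) :
    volume {xy : ℝ × ℝ | xy.1 ∈ Set.Ico (0 : ℝ) 1 ∧ xy.2 ∈ Set.Ico (0 : ℝ) 1 ∧
      {abc : ℕ × ℕ × ℕ | 1 ≤ abc.1 ∧ 1 ≤ abc.2.1 ∧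
        |(abc.1 : ℝ) ^ n * xy.1 + (abc.2.1 : ℝ) ^ m * xy.2 - (abc.2.2 : ℝ) ^ p| <
          ψ (max (abc.1 ^ n) (abc.2.1 ^ m))}.Infinite} = 0 := by
  have hp0 : p ≠ 0 := Nat.one_le_iff_ne_zero.1 hp
  have hfinite : ∑' ab, volume (⋃ c, shiftedStrip n m p ψ ab c) ≠ ⊤ :=
    ne_top_of_le_ne_top (ENNReal.tsum_coe_ne_top_iff_summable.2 (hsum.mul_left _).toNNReal)
      (ENNReal.tsum_le_tsum (volume_iUnion_shiftedStrip_le n m hp0 hψpos hψanti))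
  refine measure_mono_null (fun xy ⟨hx, hy, hinf⟩ => ?_)
    (measure_limsup_cofinite_eq_zero hfinite)
  rw [Filter.mem_limsup_iff_frequently_mem, Filter.frequently_cofinite_iff_infinite]
  exact infinite_setOf_mem_iUnion_shiftedStrip n m hp0 ψ hx hy hinf

theorem stmt5 (n m p : ℕ) (hn : 1 ≤ n) (hm : 1 ≤ m) (hp : 1 ≤ p)
    (ψ : ℕ → ℝ) (hψpos : ∀ q, 0 < ψ q) (hψanti : Antitone ψ)
    (hsum : Summable (fun ab : ℕ × ℕ =>
      ψ (max ((ab.1 + 1) ^ n) ((ab.2 + 1) ^ m)) /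
        ((max ((ab.1 + 1) ^ n) ((ab.2 + 1) ^ m) : ℕ) : ℝ) ^ (1 - 1 / (p : ℝ)))) :
    volume {xy : ℝ × ℝ | xy.1 ∈ Set.Ico (0 : ℝ) 1 ∧ xy.2 ∈ Set.Ico (0 : ℝ) 1 ∧
      {abc : ℕ × ℕ × ℕ | 1 ≤ abc.1 ∧ 1 ≤ abc.2.1 ∧
        |(abc.1 : ℝ) ^ n * xy.1 + (abc.2.1 : ℝ) ^ m * xy.2 - (abc.2.2 : ℝ) ^ p| <
          ψ (max (abc.1 ^ n) (abc.2.1 ^ m))}.Infinite} = 0 :=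
  stmt5_general n m p hp ψ hψpos hψanti hsum
end

section
/- Fix n, m ∈ ℕ. For t ∈ ℤ_{≥0}, let A_t = {(a,b) ∈ ℕ² : gcd(a,b)=1, 1/2 < aⁿ/bᵐ < 2, aⁿ > bᵐ, 2^t ≤ a < 2^{t+1}}. Then the cardinality α_t of A_t satisfies α_t ≍ 2^{(n/m + 1)t}, i.e., there exist constants c₁, c₂ > 0 depending only on n, m with c₁·2^{(n/m+1)t} ≤ α_t ≤ c₂·2^{(n/m+1)t} for all sufficiently large t. -/
/-!
For fixed `a`, the admissible `b` are the integers in the open interval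
`((a^n / 2)^{1/m}, (a^n)^{1/m})`, whose length `ℓ(a) = (1 - 2^{-1/m}) a^{n/m}` is increasing in `a`.
Summing over `2^t ≤ a < 2^{t+1}` gives about `2^{(n/m + 1) t}` pairs, hence the upper bound.
For the lower bound, sieve by a common divisor `2 ≤ d ≤ 2^{t+1}`: because `ℓ` is monotone, the sum
of `ℓ(a) / d` over the multiples `a` of `d` is at most `Σ ℓ(a) / d²` plus a boundary term, and
`Σ_{d ≥ 2} d⁻² ≤ 3/4`, so at least a quarter of the pairs are coprime, up to an error of order
`(2^t + 2^{nt/m}) t`, which is negligible against `2^{(n/m + 1) t}`.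
-/

open Finset Filter

noncomputable def natIoo (u v : ℝ) : Finset ℕ := Ioo ⌊u⌋₊ ⌈v⌉₊

section NatIoo

variable {u v : ℝ}

lemma mem_natIoo (hu : 0 ≤ u) {b : ℕ} : b ∈ natIoo u v ↔ u < b ∧ (b : ℝ) < v := by
  rw [natIoo, mem_Ioo, Nat.floor_lt hu, Nat.lt_ceil]

lemma sub_sub_one_le_card_natIoo (hu : 0 ≤ u) : v - u - 1 ≤ #(natIoo u v) := by
  have hcard : ((⌈v⌉₊ : ℕ) : ℝ) ≤ #(natIoo u v) + (⌊u⌋₊ + 1 : ℕ) := by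
    rw [natIoo, Nat.card_Ioo, Nat.sub_sub]; exact_mod_cast le_tsub_add
  push_cast at hcard
  linarith [Nat.le_ceil v, Nat.floor_le hu]

lemma card_natIoo_le (hu : 0 ≤ u) (huv : u ≤ v) : (#(natIoo u v) : ℝ) ≤ v - u + 1 := by
  rw [natIoo, Nat.card_Ioo, Nat.sub_sub]
  rcases le_total ⌈v⌉₊ (⌊u⌋₊ + 1) with h | h
  · rw [Nat.sub_eq_zero_of_le h, Nat.cast_zero]; linarith
  · rw [Nat.cast_sub h]
    push_cast
    linarith [Nat.ceil_lt_add_one (hu.trans huv), Nat.lt_floor_add_one u]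

lemma card_filter_dvd_natIoo_le (hu : 0 ≤ u) (huv : u ≤ v) {d : ℕ} (hd : 0 < d) :
    (#{b ∈ natIoo u v | d ∣ b} : ℝ) ≤ (v - u) / d + 1 := by
  have hd' : (0 : ℝ) < d := by exact_mod_cast hd
  have hud : 0 ≤ u / d := by positivity
  calc (#{b ∈ natIoo u v | d ∣ b} : ℝ) ≤ #(natIoo (u / d) (v / d)) := by
        refine Nat.cast_le.2 (card_le_card_of_injOn (· / d) ?_ ?_)
        · rintro _ hb
          obtain ⟨hb, k, rfl⟩ := mem_filter.1 hb
          rw [mem_natIoo hu] at hb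
          rw [mem_coe, mem_natIoo hud]
          dsimp only
          rw [Nat.mul_div_cancel_left k hd, div_lt_iff₀ hd',
            lt_div_iff₀ hd']
          push_cast at hb
          constructor <;> linarith
        · rintro _ hb _ hc h
          obtain ⟨-, k, rfl⟩ := mem_filter.1 hb
          obtain ⟨-, l, rfl⟩ := mem_filter.1 hc
          simp_all [Nat.mul_div_cancel_left _ hd]
    _ ≤ v / d - u / d + 1 := card_natIoo_le hud (by gcongr)
    _ = (v - u) / d + 1 := by ring

end NatIoo

lemma mul_sum_filter_dvd_le {f : ℕ → ℝ} (hf : Monotone f) (hf0 : ∀ a, 0 ≤ f a) (d x X : ℕ) :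
    d * ∑ a ∈ Ico x X with d ∣ a, f a ≤ ∑ a ∈ Ico x (X + d), f a := by
  set s := {a ∈ Ico x X | d ∣ a}
  -- `f a` is at most the mean of `f` over the window `a + [0, d)`, and these windows are disjoint
  have hinj : Set.InjOn (fun p : ℕ × ℕ => p.1 + p.2) ↑(s ×ˢ range d) := by
    have hmod : ∀ p ∈ s ×ˢ range d, (p.1 + p.2) % d = p.2 := by
      simp only [s, mem_product, mem_filter, mem_range]
      rintro ⟨_, j⟩ ⟨⟨-, k, rfl⟩, hj⟩
      rw [Nat.mul_add_mod, Nat.mod_eq_of_lt hj]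
    intro p hp q hq h
    have h2 : p.2 = q.2 := by rw [← hmod p hp, ← hmod q hq]; exact congrArg (· % d) h
    exact Prod.ext (by simp only at h; omega) h2
  calc (d : ℝ) * ∑ a ∈ s, f a = ∑ a ∈ s, ∑ _j ∈ range d, f a := by
        simp [mul_sum]
    _ ≤ ∑ a ∈ s, ∑ j ∈ range d, f (a + j) :=
        sum_le_sum fun a _ => sum_le_sum fun j _ => hf (Nat.le_add_right a j)
    _ = ∑ b ∈ (s ×ˢ range d).image (fun p => p.1 + p.2), f b := by
        rw [sum_image hinj, sum_product]
    _ ≤ ∑ a ∈ Ico x (X + d), f a := by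
        refine sum_le_sum_of_subset_of_nonneg ?_ fun _ _ _ => hf0 _
        intro b hb
        simp only [s, mem_image, mem_product, mem_filter, mem_Ico, mem_range] at hb
        obtain ⟨⟨a, j⟩, ⟨⟨⟨hxa, haX⟩, -⟩, hj⟩, rfl⟩ := hb
        rw [mem_Ico]
        omega

lemma card_le_card_filter_coprime_add_sum (s : Finset ℕ) {a D : ℕ} (ha : 0 < a) (haD : a ≤ D) :
    #s ≤ #{b ∈ s | a.Coprime b} + ∑ d ∈ Ioc 1 D with d ∣ a, #{b ∈ s | d ∣ b} := by
  rw [← card_filter_add_card_filter_not (s := s) (fun b => a.Coprime b)]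
  gcongr
  refine (card_le_card fun b hb => ?_).trans card_biUnion_le
  obtain ⟨hbs, hb⟩ := mem_filter.1 hb
  have hg : 0 < a.gcd b := Nat.gcd_pos_of_pos_left b ha
  have hga : a.gcd b ≤ a := Nat.le_of_dvd ha (Nat.gcd_dvd_left a b)
  refine mem_biUnion.2 ⟨a.gcd b, ?_, mem_filter.2 ⟨hbs, Nat.gcd_dvd_right a b⟩⟩
  simp only [mem_filter, mem_Ioc, Nat.gcd_dvd_left, and_true]
  exact ⟨lt_of_le_of_ne hg (Ne.symm hb), hga.trans haD⟩

lemma sum_Ioc_one_inv_sq_le {X : ℕ} (hX : 2 ≤ X) : ∑ d ∈ Ioc 1 X, ((d : ℝ) ^ 2)⁻¹ ≤ 3 / 4 := by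
  rw [← sum_Ioc_consecutive _ one_le_two hX, show Ioc 1 2 = {2} from rfl, sum_singleton]
  have h := sum_Ioc_inv_sq_le_sub (α := ℝ) two_ne_zero hX
  norm_num at h ⊢
  linarith [inv_nonneg.2 (Nat.cast_nonneg (α := ℝ) X)]

lemma sum_Ioc_one_inv_le_log (X : ℕ) : ∑ d ∈ Ioc 1 X, (d : ℝ)⁻¹ ≤ Real.log X := by
  rcases X.eq_zero_or_pos with rfl | hX
  · simp
  have h : ∑ d ∈ Icc 1 X, (d : ℝ)⁻¹ ≤ 1 + Real.log X := by
    simpa [harmonic_eq_sum_Icc] using harmonic_le_one_add_log X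
  rwa [show Icc 1 X = Ioc 0 X from Icc_add_one_left_eq_Ioc 0 X,
    ← sum_Ioc_consecutive _ zero_le_one hX, show Ioc 0 1 = {1} from rfl,
    sum_singleton, Nat.cast_one, inv_one, add_le_add_iff_left] at h

lemma sum_card_le_sum_card_filter_coprime_add (s : ℕ → Finset ℕ) {x : ℕ} (hx : 0 < x) (X : ℕ) :
    ∑ a ∈ Ico x X, #(s a) ≤ ∑ a ∈ Ico x X, #{b ∈ s a | a.Coprime b} +
      ∑ d ∈ Ioc 1 X, ∑ a ∈ Ico x X with d ∣ a, #{b ∈ s a | d ∣ b} := by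
  have hswap : ∑ d ∈ Ioc 1 X, ∑ a ∈ Ico x X with d ∣ a, #{b ∈ s a | d ∣ b} =
      ∑ a ∈ Ico x X, ∑ d ∈ Ioc 1 X with d ∣ a, #{b ∈ s a | d ∣ b} := by
    simp only [sum_filter]
    exact sum_comm
  rw [hswap, ← sum_add_distrib]
  refine sum_le_sum fun a ha => ?_
  obtain ⟨hxa, haX⟩ := mem_Ico.1 ha
  exact card_le_card_filter_coprime_add_sum (s a) (hx.trans_le hxa) haX.le

lemma eventually_natCast_add_one_le_mul_pow {q ε : ℝ} (hq : 1 < q) (hε : 0 < ε) :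
    ∀ᶠ t : ℕ in atTop, (t : ℝ) + 1 ≤ ε * q ^ t := by
  have hlin := (isLittleO_coe_const_pow_of_one_lt (R := ℝ) hq).bound (half_pos hε)
  have hone := (tendsto_pow_atTop_atTop_of_one_lt hq).eventually_ge_atTop (2 / ε)
  filter_upwards [hlin, hone] with t hlin hone
  rw [Real.norm_natCast, Real.norm_of_nonneg (by positivity)] at hlin
  have := mul_le_mul_of_nonneg_left hone (half_pos hε).le
  rw [show ε / 2 * (2 / ε) = 1 by field_simp] at this
  linarith

section Strip

variable {u v : ℕ → ℝ} (hu : ∀ a, 0 ≤ u a) (huv : ∀ a, u a ≤ v a)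
  (hmono : Monotone fun a => v a - u a)
include hu huv hmono

lemma sum_card_filter_dvd_natIoo_le {x X d : ℕ} (hxX : x ≤ X) (hd : 0 < d) (hdX : d ≤ X) :
    ∑ a ∈ Ico x X with d ∣ a, (#{b ∈ natIoo (u a) (v a) | d ∣ b} : ℝ) ≤
      (∑ a ∈ Ico x X, (v a - u a)) / d ^ 2 + (v (2 * X) - u (2 * X) + X) / d + 1 := by
  have hd' : (0 : ℝ) < d := by exact_mod_cast hd
  have htail : ∑ a ∈ Ico X (X + d), (v a - u a) ≤ d * (v (2 * X) - u (2 * X)) := by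
    simpa using sum_le_card_nsmul (Ico X (X + d)) _ _ fun a ha => hmono (by simp at ha; omega)
  have hcard : ((X + d - x : ℕ) : ℝ) ≤ X + d := by exact_mod_cast Nat.sub_le _ _
  calc ∑ a ∈ Ico x X with d ∣ a, (#{b ∈ natIoo (u a) (v a) | d ∣ b} : ℝ)
      ≤ ∑ a ∈ Ico x X with d ∣ a, ((v a - u a) / d + 1) :=
        sum_le_sum fun a _ => card_filter_dvd_natIoo_le (hu a) (huv a) hd
    _ ≤ (∑ a ∈ Ico x (X + d), ((v a - u a) / d + 1)) / d := by
        rw [le_div_iff₀ hd', mul_comm]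
        refine mul_sum_filter_dvd_le (fun a b hab => ?_) (fun a => ?_) d x X
        · exact add_le_add_left (div_le_div_of_nonneg_right (hmono hab) hd'.le) 1
        · have := huv a; positivity
    _ = ((∑ a ∈ Ico x X, (v a - u a) + ∑ a ∈ Ico X (X + d), (v a - u a)) / d +
          (X + d - x : ℕ)) / d := by
        rw [sum_add_distrib, ← sum_div, sum_Ico_consecutive _ hxX (Nat.le_add_right X d)]
        simp
    _ ≤ ((∑ a ∈ Ico x X, (v a - u a) + d * (v (2 * X) - u (2 * X))) / d + (X + d)) / d := by
        gcongr
    _ = (∑ a ∈ Ico x X, (v a - u a)) / d ^ 2 + (v (2 * X) - u (2 * X) + X) / d + 1 := by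
        field_simp
        ring

theorem sum_card_coprime_natIoo_ge {x X : ℕ} (hx : 0 < x) (hxX : x ≤ X) (hX : 2 ≤ X) :
    (∑ a ∈ Ico x X, (v a - u a)) / 4 - 2 * X - (v (2 * X) - u (2 * X) + X) * Real.log X ≤
      ∑ a ∈ Ico x X, (#{b ∈ natIoo (u a) (v a) | a.Coprime b} : ℝ) := by
  set S := ∑ a ∈ Ico x X, (v a - u a)
  set L := v (2 * X) - u (2 * X) + X
  have hS : 0 ≤ S := sum_nonneg fun a _ => sub_nonneg.2 (huv a)
  have hL : 0 ≤ L := by have := huv (2 * X); positivity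
  have hsieve : ∑ a ∈ Ico x X, (#(natIoo (u a) (v a)) : ℝ) ≤
      ∑ a ∈ Ico x X, (#{b ∈ natIoo (u a) (v a) | a.Coprime b} : ℝ) +
        ∑ d ∈ Ioc 1 X, ∑ a ∈ Ico x X with d ∣ a, (#{b ∈ natIoo (u a) (v a) | d ∣ b} : ℝ) := by
    exact_mod_cast sum_card_le_sum_card_filter_coprime_add (fun a => natIoo (u a) (v a)) hx X
  have hall : S - X ≤ ∑ a ∈ Ico x X, (#(natIoo (u a) (v a)) : ℝ) := by
    have hcard : ((X - x : ℕ) : ℝ) ≤ X := by exact_mod_cast Nat.sub_le _ _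
    calc S - X ≤ S - (X - x : ℕ) := by linarith
      _ = ∑ a ∈ Ico x X, (v a - u a - 1) := by
        rw [sum_sub_distrib, sum_const, Nat.card_Ico, nsmul_one]
      _ ≤ _ := sum_le_sum fun a _ => sub_sub_one_le_card_natIoo (hu a)
  have hmultiples : ∑ d ∈ Ioc 1 X, ∑ a ∈ Ico x X with d ∣ a,
      (#{b ∈ natIoo (u a) (v a) | d ∣ b} : ℝ) ≤ 3 / 4 * S + L * Real.log X + X := by
    calc _ ≤ ∑ d ∈ Ioc 1 X, (S / d ^ 2 + L / d + 1) := sum_le_sum fun d hd => by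
          obtain ⟨hd1, hdX⟩ := mem_Ioc.1 hd
          exact sum_card_filter_dvd_natIoo_le hu huv hmono hxX (by omega) hdX
      _ = S * ∑ d ∈ Ioc 1 X, ((d : ℝ) ^ 2)⁻¹ + L * ∑ d ∈ Ioc 1 X, (d : ℝ)⁻¹ + (X - 1 : ℕ) := by
          simp [sum_add_distrib, mul_sum, div_eq_mul_inv]
      _ ≤ S * (3 / 4) + L * Real.log X + X := by
          gcongr
          · exact sum_Ioc_one_inv_sq_le hX
          · exact sum_Ioc_one_inv_le_log X
          · exact_mod_cast Nat.sub_le _ _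
      _ = 3 / 4 * S + L * Real.log X + X := by ring
  linarith

end Strip

section PowRoot

variable (n m : ℕ)

noncomputable def powRoot (a : ℕ) : ℝ := ((a : ℝ) ^ n) ^ (m : ℝ)⁻¹

noncomputable def halfPowRoot (a : ℕ) : ℝ := ((a : ℝ) ^ n / 2) ^ (m : ℝ)⁻¹

noncomputable def gapRatio : ℝ := 1 - (2 ^ (m : ℝ)⁻¹)⁻¹

def coprimePairs (t : ℕ) : Set (ℕ × ℕ) :=
  {ab : ℕ × ℕ | 1 ≤ ab.1 ∧ 1 ≤ ab.2 ∧ Nat.Coprime ab.1 ab.2 ∧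
    (1 : ℝ) / 2 < (ab.1 : ℝ) ^ n / (ab.2 : ℝ) ^ m ∧
    (ab.1 : ℝ) ^ n / (ab.2 : ℝ) ^ m < 2 ∧
    ab.2 ^ m < ab.1 ^ n ∧ 2 ^ t ≤ ab.1 ∧ ab.1 < 2 ^ (t + 1)}

variable {n m}

lemma halfPowRoot_nonneg (a : ℕ) : 0 ≤ halfPowRoot n m a := by
  unfold halfPowRoot; positivity

lemma halfPowRoot_le_powRoot (a : ℕ) : halfPowRoot n m a ≤ powRoot n m a :=
  Real.rpow_le_rpow (by positivity) (by linarith [pow_nonneg (Nat.cast_nonneg (α := ℝ) a) n])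
    (by positivity)

lemma powRoot_sub_halfPowRoot (a : ℕ) :
    powRoot n m a - halfPowRoot n m a = gapRatio m * powRoot n m a := by
  rw [halfPowRoot, Real.div_rpow (by positivity) zero_le_two, powRoot, gapRatio]
  ring

lemma gapRatio_nonneg : 0 ≤ gapRatio m := by
  rw [gapRatio, sub_nonneg]
  exact inv_le_one_of_one_le₀ (Real.one_le_rpow one_le_two (by positivity))

lemma gapRatio_pos (hm : 0 < m) : 0 < gapRatio m := by
  rw [gapRatio, sub_pos]
  exact inv_lt_one_of_one_lt₀ (Real.one_lt_rpow one_lt_two (by positivity))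

lemma gapRatio_le_one : gapRatio m ≤ 1 := by
  rw [gapRatio]; linarith [inv_nonneg.2 (Real.rpow_nonneg (zero_le_two (α := ℝ)) (m : ℝ)⁻¹)]

lemma monotone_powRoot : Monotone (powRoot n m) := fun a b hab =>
  Real.rpow_le_rpow (by positivity) (by gcongr) (by positivity)

lemma monotone_powRoot_sub_halfPowRoot :
    Monotone fun a => powRoot n m a - halfPowRoot n m a := fun a b hab => by
  simp only [powRoot_sub_halfPowRoot]
  exact mul_le_mul_of_nonneg_left (monotone_powRoot hab) gapRatio_nonneg

lemma powRoot_pow (a k : ℕ) : powRoot n m (a ^ k) = powRoot n m a ^ k := by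
  rw [powRoot, powRoot, Nat.cast_pow, ← pow_mul, mul_comm, pow_mul,
    Real.rpow_pow_comm (by positivity)]

lemma one_le_powRoot {a : ℕ} (ha : 1 ≤ a) : 1 ≤ powRoot n m a :=
  Real.one_le_rpow (one_le_pow₀ (by exact_mod_cast ha)) (by positivity)

lemma two_rpow_eq_two_pow_mul_powRoot (t : ℕ) :
    (2 : ℝ) ^ (((n : ℝ) / m + 1) * t) = 2 ^ t * powRoot n m 2 ^ t := by
  rw [powRoot, Nat.cast_ofNat, ← Real.rpow_natCast 2 n, ← Real.rpow_mul zero_le_two,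
    ← Real.rpow_mul_natCast zero_le_two, add_mul, one_mul, Real.rpow_add two_pos,
    Real.rpow_natCast, div_eq_mul_inv, mul_comm]

lemma mem_natIoo_halfPowRoot_powRoot (hm : 0 < m) {a b : ℕ} :
    b ∈ natIoo (halfPowRoot n m a) (powRoot n m a) ↔ a ^ n < 2 * b ^ m ∧ b ^ m < a ^ n := by
  have hm' : (0 : ℝ) < m := by exact_mod_cast hm
  rw [mem_natIoo (halfPowRoot_nonneg a), halfPowRoot, powRoot,
    Real.rpow_inv_lt_iff_of_pos (by positivity) (by positivity) hm',
    Real.lt_rpow_inv_iff_of_pos (by positivity) (by positivity) hm', Real.rpow_natCast,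
    div_lt_iff₀ two_pos, mul_comm]
  norm_cast

lemma coprimePairs_eq (hm : 0 < m) (t : ℕ) :
    coprimePairs n m t = ↑(((Ico (2 ^ t) (2 ^ (t + 1))).sigma fun a =>
      {b ∈ natIoo (halfPowRoot n m a) (powRoot n m a) | a.Coprime b}).map
        (Equiv.sigmaEquivProd ℕ ℕ).toEmbedding) := by
  ext ⟨a, b⟩
  rw [mem_coe, mem_map_equiv]
  simp only [coprimePairs, Set.mem_ofPred_eq, Equiv.sigmaEquivProd_symm_apply, mem_sigma, mem_Ico,
    mem_filter, mem_natIoo_halfPowRoot_powRoot hm]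
  constructor
  · rintro ⟨-, hb, hcop, -, hlt2, hlt, hta, hat⟩
    rw [div_lt_iff₀ (by positivity)] at hlt2
    exact ⟨⟨hta, hat⟩, ⟨by exact_mod_cast hlt2, hlt⟩, hcop⟩
  · rintro ⟨⟨hta, hat⟩, ⟨hlt2, hlt⟩, hcop⟩
    have hb : 1 ≤ b := Nat.pos_of_ne_zero (by rintro rfl; simp [hm.ne'] at hlt2)
    have hbm : (0 : ℝ) < b ^ m := by positivity
    have hlt' : (b : ℝ) ^ m < a ^ n := by exact_mod_cast hlt
    have hlt2' : (a : ℝ) ^ n < 2 * b ^ m := by exact_mod_cast hlt2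
    refine ⟨Nat.one_le_two_pow.trans hta, hb, hcop, ?_, ?_, hlt, hta, hat⟩
    · rw [lt_div_iff₀ hbm]; linarith
    · rw [div_lt_iff₀ hbm]; linarith

lemma natCard_coprimePairs (hm : 0 < m) (t : ℕ) :
    Nat.card (coprimePairs n m t) = ∑ a ∈ Ico (2 ^ t) (2 ^ (t + 1)),
      #{b ∈ natIoo (halfPowRoot n m a) (powRoot n m a) | a.Coprime b} := by
  rw [coprimePairs_eq hm, Nat.card_coe_set_eq, Set.ncard_coe_finset, card_map, card_sigma]

lemma card_Ico_two_pow (t : ℕ) : #(Ico (2 ^ t) (2 ^ (t + 1))) = 2 ^ t := by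
  rw [Nat.card_Ico, pow_succ]; omega

lemma natCard_coprimePairs_le (hm : 0 < m) (t : ℕ) :
    (Nat.card (coprimePairs n m t) : ℝ) ≤ 2 * powRoot n m 2 * 2 ^ (((n : ℝ) / m + 1) * t) := by
  rw [natCard_coprimePairs hm, two_rpow_eq_two_pow_mul_powRoot]
  set r := powRoot n m 2
  have hr : 1 ≤ r ^ (t + 1) := one_le_pow₀ (one_le_powRoot one_le_two)
  have hterm : ∀ a ∈ Ico (2 ^ t) (2 ^ (t + 1)),
      (#{b ∈ natIoo (halfPowRoot n m a) (powRoot n m a) | a.Coprime b} : ℝ) ≤ r ^ (t + 1) + 1 := by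
    intro a ha
    calc (#{b ∈ natIoo (halfPowRoot n m a) (powRoot n m a) | a.Coprime b} : ℝ)
        ≤ #(natIoo (halfPowRoot n m a) (powRoot n m a)) := by
          exact_mod_cast card_filter_le _ _
      _ ≤ powRoot n m a - halfPowRoot n m a + 1 :=
          card_natIoo_le (halfPowRoot_nonneg a) (halfPowRoot_le_powRoot a)
      _ ≤ powRoot n m (2 ^ (t + 1)) + 1 := by
          linarith [halfPowRoot_nonneg (n := n) (m := m) a,
            monotone_powRoot (n := n) (m := m) (mem_Ico.1 ha).2.le]
      _ = r ^ (t + 1) + 1 := by rw [powRoot_pow]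
  calc ((∑ a ∈ Ico (2 ^ t) (2 ^ (t + 1)),
        #{b ∈ natIoo (halfPowRoot n m a) (powRoot n m a) | a.Coprime b} : ℕ) : ℝ)
      ≤ 2 ^ t * (r ^ (t + 1) + 1) := by
        push_cast
        have := sum_le_card_nsmul _ _ _ hterm
        rwa [card_Ico_two_pow, nsmul_eq_mul, Nat.cast_pow, Nat.cast_ofNat] at this
    _ ≤ 2 * r * (2 ^ t * r ^ t) := by
        rw [pow_succ] at hr ⊢
        nlinarith [pow_pos (two_pos (α := ℝ)) t]

lemma natCard_coprimePairs_ge (hm : 0 < m) (t : ℕ) :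
    gapRatio m / 4 * 2 ^ (((n : ℝ) / m + 1) * t) -
        (6 * 2 ^ t + powRoot n m 2 ^ 2 * powRoot n m 2 ^ t) * (t + 1) ≤
      Nat.card (coprimePairs n m t) := by
  rw [natCard_coprimePairs hm, two_rpow_eq_two_pow_mul_powRoot]
  push_cast
  set r := powRoot n m 2
  have hr : 1 ≤ r := one_le_powRoot one_le_two
  have hmono := monotone_powRoot_sub_halfPowRoot (n := n) (m := m)
  refine le_trans ?_ (sum_card_coprime_natIoo_ge halfPowRoot_nonneg halfPowRoot_le_powRoot hmono
    (Nat.two_pow_pos t) (Nat.pow_le_pow_right two_pos t.le_succ)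
    (Nat.le_self_pow t.succ_ne_zero 2))
  have hS : gapRatio m * (2 ^ t * r ^ t) ≤
      ∑ a ∈ Ico (2 ^ t) (2 ^ (t + 1)), (powRoot n m a - halfPowRoot n m a) := by
    have := card_nsmul_le_sum (Ico (2 ^ t) (2 ^ (t + 1))) _ _ fun a ha => hmono (mem_Ico.1 ha).1
    simp only [card_Ico_two_pow, nsmul_eq_mul] at this
    rw [powRoot_sub_halfPowRoot (2 ^ t), powRoot_pow] at this
    push_cast at this
    linarith
  have hL : powRoot n m (2 * 2 ^ (t + 1)) - halfPowRoot n m (2 * 2 ^ (t + 1)) ≤ r ^ 2 * r ^ t := by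
    rw [powRoot_sub_halfPowRoot, ← pow_succ', powRoot_pow, ← pow_add, add_comm 2 t]
    exact mul_le_of_le_one_left (pow_nonneg (zero_le_one.trans hr) _) gapRatio_le_one
  have hlog : Real.log (2 ^ (t + 1) : ℕ) ≤ t + 1 := by
    push_cast
    rw [Real.log_pow]
    push_cast
    nlinarith [Real.log_two_lt_d9]
  have hX : ((2 ^ (t + 1) : ℕ) : ℝ) = 2 * 2 ^ t := by push_cast; ring
  have hlog0 : 0 ≤ Real.log (2 ^ (t + 1) : ℕ) := Real.log_natCast_nonneg _
  have herr : (powRoot n m (2 * 2 ^ (t + 1)) - halfPowRoot n m (2 * 2 ^ (t + 1)) +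
      ((2 ^ (t + 1) : ℕ) : ℝ)) * Real.log (2 ^ (t + 1) : ℕ) ≤ (r ^ 2 * r ^ t + 2 * 2 ^ t) * (t + 1) :=
    mul_le_mul (by linarith) hlog hlog0 (by have := zero_le_one.trans hr; positivity)
  have ht : (2 : ℝ) ^ t ≤ 2 ^ t * (t + 1) :=
    le_mul_of_one_le_right (by positivity) (by linarith [t.cast_nonneg (α := ℝ)])
  linarith

lemma eventually_le_natCard_coprimePairs (hn : 0 < n) (hm : 0 < m) :
    ∀ᶠ t : ℕ in atTop,
      gapRatio m / 8 * 2 ^ (((n : ℝ) / m + 1) * t) ≤ Nat.card (coprimePairs n m t) := by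
  set r := powRoot n m 2
  have hr : 1 < r := Real.one_lt_rpow (one_lt_pow₀ (by norm_num) hn.ne') (by positivity)
  have hκ := gapRatio_pos hm
  set ε := gapRatio m / (8 * (6 + r ^ 2))
  have hε : 0 < ε := by positivity
  have hεr : (6 + r ^ 2) * ε = gapRatio m / 8 := by simp only [ε]; field_simp
  filter_upwards [eventually_natCast_add_one_le_mul_pow hr hε,
    eventually_natCast_add_one_le_mul_pow one_lt_two hε] with t hrt h2t
  refine le_trans ?_ (natCard_coprimePairs_ge hm t)
  rw [two_rpow_eq_two_pow_mul_powRoot]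
  change gapRatio m / 8 * (2 ^ t * r ^ t) ≤
    gapRatio m / 4 * (2 ^ t * r ^ t) - (6 * 2 ^ t + r ^ 2 * r ^ t) * (t + 1)
  have e1 := mul_le_mul_of_nonneg_left hrt (by positivity : (0 : ℝ) ≤ 6 * 2 ^ t)
  have e2 := mul_le_mul_of_nonneg_left h2t (by positivity : (0 : ℝ) ≤ r ^ 2 * r ^ t)
  have e3 := congrArg (· * (2 ^ t * r ^ t)) hεr
  linarith

end PowRoot

theorem stmt8 (n m : ℕ) (hn : 1 ≤ n) (hm : 1 ≤ m) :
    ∃ c₁ c₂ : ℝ, 0 < c₁ ∧ 0 < c₂ ∧ ∃ T : ℕ, ∀ t : ℕ, T ≤ t →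
      c₁ * 2 ^ (((n : ℝ) / m + 1) * t) ≤
        (Nat.card {ab : ℕ × ℕ | 1 ≤ ab.1 ∧ 1 ≤ ab.2 ∧ Nat.Coprime ab.1 ab.2 ∧
          (1 : ℝ) / 2 < (ab.1 : ℝ) ^ n / (ab.2 : ℝ) ^ m ∧
          (ab.1 : ℝ) ^ n / (ab.2 : ℝ) ^ m < 2 ∧
          ab.2 ^ m < ab.1 ^ n ∧ 2 ^ t ≤ ab.1 ∧ ab.1 < 2 ^ (t + 1)} : ℝ) ∧
      (Nat.card {ab : ℕ × ℕ | 1 ≤ ab.1 ∧ 1 ≤ ab.2 ∧ Nat.Coprime ab.1 ab.2 ∧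
          (1 : ℝ) / 2 < (ab.1 : ℝ) ^ n / (ab.2 : ℝ) ^ m ∧
          (ab.1 : ℝ) ^ n / (ab.2 : ℝ) ^ m < 2 ∧
          ab.2 ^ m < ab.1 ^ n ∧ 2 ^ t ≤ ab.1 ∧ ab.1 < 2 ^ (t + 1)} : ℝ) ≤
        c₂ * 2 ^ (((n : ℝ) / m + 1) * t) := by
  obtain ⟨T, hT⟩ := eventually_atTop.1 (eventually_le_natCard_coprimePairs hn hm)
  have hκ := gapRatio_pos hm
  have hr := one_le_powRoot (n := n) (m := m) one_le_two
  exact ⟨gapRatio m / 8, 2 * powRoot n m 2, by positivity, by positivity, T,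
    fun t ht => ⟨hT t ht, natCard_coprimePairs_le hm t⟩⟩
end

section
/- Let n, m, p ∈ ℕ with gcd(n,m) ≥ 2, n ≠ m or (n,m) ≠ (2,2), and suppose p > nm/(nm − n − m) (assuming nm − n − m > 0). Then for every decreasing positive function ψ with ψ(r) ≤ 1 eventually, the sum ∑_{(a,b)∈ℕ²} ψ(h_{a,b})/h_{a,b}^{1−1/p} converges, where h_{a,b} = max(aⁿ, bᵐ). -/
/-!
Since `max X Y ≥ X ^ α * Y ^ (1 - α)` for every `α ∈ [0, 1]`, the term `max (aⁿ, bᵐ) ^ (-s)`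
is bounded by `a ^ (-n α s) * b ^ (-m (1 - α) s)`, a product of two `p`-series. Both converge
for a suitable `α` exactly when `1/n + 1/m < s`, and the hypothesis on `p` says precisely that
`1/n + 1/m < 1 - 1/p`. A decreasing positive `ψ` is bounded by `ψ 0`.
-/

open Real

lemma Real.rpow_mul_rpow_one_sub_le_max {x y α : ℝ} (hx : 0 ≤ x) (hy : 0 ≤ y)
    (hα₀ : 0 ≤ α) (hα₁ : α ≤ 1) : x ^ α * y ^ (1 - α) ≤ max x y := by
  calc x ^ α * y ^ (1 - α) ≤ α * x + (1 - α) * y :=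
        geom_mean_le_arith_mean2_weighted hα₀ (by linarith) hx hy (by ring)
    _ ≤ α * max x y + (1 - α) * max x y := by
        nlinarith [le_max_left x y, le_max_right x y]
    _ = max x y := by ring

lemma Real.summable_nat_add_one_rpow_neg {t : ℝ} (ht : 1 < t) :
    Summable (fun a : ℕ => ((a : ℝ) + 1) ^ (-t)) := by
  have h := (summable_nat_add_iff 1).2 (summable_nat_rpow.2 (by linarith : -t < -1))
  exact h.congr fun a => by push_cast; rfl

theorem summable_max_rpow_rpow_neg {u v s : ℝ} (hu : 0 < u) (hv : 0 < v)
    (hs : 1 / u + 1 / v < s) :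
    Summable (fun ab : ℕ × ℕ =>
      max (((ab.1 : ℝ) + 1) ^ u) (((ab.2 : ℝ) + 1) ^ v) ^ (-s)) := by
  have hs₀ : 0 < s := lt_trans (by positivity) hs
  have hsplit : 1 / (u * s) + 1 / (v * s) < 1 := by
    rw [show 1 / (u * s) + 1 / (v * s) = (1 / u + 1 / v) / s by field_simp, div_lt_one hs₀]
    exact hs
  obtain ⟨α, hα, hα'⟩ : ∃ α, 1 / (u * s) < α ∧ 1 / (v * s) < 1 - α :=
    ⟨(1 + 1 / (u * s) - 1 / (v * s)) / 2, by linarith, by linarith⟩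
  have hα₀ : 0 < α := lt_trans (by positivity) hα
  have hα₁ : 0 < 1 - α := lt_trans (by positivity) hα'
  have hexp₁ : 1 < u * α * s := by
    have := (div_lt_iff₀ (by positivity)).mp hα
    linarith
  have hexp₂ : 1 < v * (1 - α) * s := by
    have := (div_lt_iff₀ (by positivity)).mp hα'
    linarith
  refine Summable.of_nonneg_of_le (fun _ => by positivity) (fun ab => ?_)
    ((summable_nat_add_one_rpow_neg hexp₁).mul_of_nonneg
      (summable_nat_add_one_rpow_neg hexp₂) (fun _ => by positivity) (fun _ => by positivity))
  set x : ℝ := (ab.1 : ℝ) + 1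
  set y : ℝ := (ab.2 : ℝ) + 1
  have hx : 0 < x := by positivity
  have hy : 0 < y := by positivity
  have hgm : (x ^ u) ^ α * (y ^ v) ^ (1 - α) ≤ max (x ^ u) (y ^ v) :=
    rpow_mul_rpow_one_sub_le_max (by positivity) (by positivity) hα₀.le (by linarith)
  calc max (x ^ u) (y ^ v) ^ (-s) ≤ ((x ^ u) ^ α * (y ^ v) ^ (1 - α)) ^ (-s) :=
        rpow_le_rpow_of_nonpos (by positivity) hgm (by linarith)
    _ = x ^ (-(u * α * s)) * y ^ (-(v * (1 - α) * s)) := by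
        rw [mul_rpow (by positivity) (by positivity), ← rpow_mul hx.le, ← rpow_mul hx.le,
          ← rpow_mul hy.le, ← rpow_mul hy.le]
        ring_nf

lemma one_div_add_one_div_lt_one_sub_one_div {n m p : ℝ} (hn : 0 < n) (hm : 0 < m)
    (hD : 0 < n * m - n - m) (hp : n * m / (n * m - n - m) < p) :
    1 / n + 1 / m < 1 - 1 / p := by
  have hp' : 1 / p < (n * m - n - m) / (n * m) := by
    simpa using one_div_lt_one_div_of_lt (by positivity) hp
  have : (n * m - n - m) / (n * m) = 1 - 1 / n - 1 / m := by field_simp; ring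
  linarith

theorem stmt9_general (n m p : ℕ)
    (hdenom : 0 < n * m - n - m)
    (hplarge : ((n : ℝ) * m) / ((n : ℝ) * m - n - m) < (p : ℝ))
    (ψ : ℕ → ℝ) (hψpos : ∀ q, 0 < ψ q) (hψanti : Antitone ψ) :
    Summable (fun ab : ℕ × ℕ =>
      ψ (max ((ab.1 + 1) ^ n) ((ab.2 + 1) ^ m)) /
        ((max ((ab.1 + 1) ^ n) ((ab.2 + 1) ^ m) : ℕ) : ℝ) ^ (1 - 1 / (p : ℝ))) := by
  have hnm : n + m < n * m := by omega
  have hn : 0 < n := Nat.pos_of_ne_zero (by rintro rfl; simp at hnm)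
  have hm : 0 < m := Nat.pos_of_ne_zero (by rintro rfl; simp at hnm)
  have hD : (0 : ℝ) < n * m - n - m := by
    have : ((n + m : ℕ) : ℝ) < (n * m : ℕ) := by exact_mod_cast hnm
    push_cast at this
    linarith
  have hsum := (summable_max_rpow_rpow_neg (s := 1 - 1 / (p : ℝ)) (by positivity)
    (by positivity) (one_div_add_one_div_lt_one_sub_one_div (by positivity) (by positivity)
      hD hplarge)).mul_left (ψ 0)
  refine Summable.of_nonneg_of_le (fun _ => div_nonneg (hψpos _).le (by positivity))
    (fun ab => ?_) hsum
  rw [div_eq_mul_inv, ← rpow_neg (by positivity)]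
  push_cast [rpow_natCast]
  exact mul_le_mul_of_nonneg_right (hψanti (Nat.zero_le _)) (by positivity)

theorem stmt9 (n m p : ℕ) (hn : 1 ≤ n) (hm : 1 ≤ m) (hp : 1 ≤ p)
    (hgcd : 2 ≤ Nat.gcd n m) (hnot22 : ¬ (n = 2 ∧ m = 2))
    (hdenom : 0 < n * m - n - m)
    (hplarge : ((n : ℝ) * m) / ((n : ℝ) * m - n - m) < (p : ℝ))
    (ψ : ℕ → ℝ) (hψpos : ∀ q, 0 < ψ q) (hψanti : Antitone ψ)
    (hψle : ∃ R : ℕ, ∀ r : ℕ, R ≤ r → ψ r ≤ 1) :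
    Summable (fun ab : ℕ × ℕ =>
      ψ (max ((ab.1 + 1) ^ n) ((ab.2 + 1) ^ m)) /
        ((max ((ab.1 + 1) ^ n) ((ab.2 + 1) ^ m) : ℕ) : ℝ) ^ (1 - 1 / (p : ℝ))) :=
  stmt9_general n m p hdenom hplarge ψ hψpos hψanti
end

section
/- Let n, m ∈ ℕ, k = gcd(n,m) ≥ 2, and let (a₁,b₁) ≠ (a₂,b₂) be coprime pairs in ℕ² with 1/2 < aᵢⁿ/bᵢᵐ < 2 for i = 1,2. Set hᵢ = max(aᵢⁿ, bᵢᵐ) and let α be the (acute) angle between the vectors (a₁ⁿ, b₁ᵐ) and (a₂ⁿ, b₂ᵐ). Then sin α ≫ h₁^{−1/k} h₂^{−1/k}, with implied constant depending only on n and m. -/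
/-!
Put `K = gcd(n, m)`, `x = a₁^(n/K) b₂^(m/K)` and `y = a₂^(n/K) b₁^(m/K)`. Then
`a₁ⁿb₂ᵐ - a₂ⁿb₁ᵐ = x^K - y^K`, and coprimality forces `x ≠ y`, so this integer is at least
`max(x, y)^(K-1)` in absolute value. On the other hand the ratio conditions give
`h₁h₂ ≤ 4 a₁ⁿb₂ᵐ ≤ 4 max(x, y)^K`, while the product of the two norms is at most `2 h₁h₂`.
Comparing, `sin α ≥ max(x, y)^(K-1) / (2 h₁h₂) ≥ (h₁h₂)^(-1/K) / 8`.
-/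

open Real

lemma Nat.pow_pred_add_pow_le_pow {x y K : ℕ} (hK : K ≠ 0) (h : y < x) :
    x ^ (K - 1) + y ^ K ≤ x ^ K := by
  obtain ⟨j, rfl⟩ : ∃ j, K = j + 1 := ⟨K - 1, by omega⟩
  calc x ^ j + y ^ (j + 1) ≤ x ^ j + x ^ j * y := by
        rw [pow_succ]; gcongr
    _ = x ^ j * (y + 1) := by ring
    _ ≤ x ^ (j + 1) := by rw [pow_succ]; gcongr; exact h

lemma pow_pred_max_le_abs_pow_sub_pow {x y K : ℕ} (hK : K ≠ 0) (hxy : x ≠ y) :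
    ((max x y : ℕ) : ℝ) ^ (K - 1) ≤ |(x : ℝ) ^ K - (y : ℝ) ^ K| := by
  wlog h : y < x generalizing x y
  · rw [max_comm, abs_sub_comm]
    exact this hxy.symm (by omega)
  have hle : ((x ^ (K - 1) + y ^ K : ℕ) : ℝ) ≤ ((x ^ K : ℕ) : ℝ) := by
    exact_mod_cast Nat.pow_pred_add_pow_le_pow hK h
  push_cast at hle
  have hpos : (0 : ℝ) ≤ (x : ℝ) ^ (K - 1) := by positivity
  rw [max_eq_left h.le, abs_of_nonneg (by linarith)]
  linarith

lemma Nat.Coprime.eq_of_mul_eq_mul {a₁ b₁ a₂ b₂ : ℕ} (h₁ : a₁.Coprime b₁) (h₂ : a₂.Coprime b₂)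
    (h : a₁ * b₂ = a₂ * b₁) : a₁ = a₂ ∧ b₁ = b₂ := by
  have ha : a₁ = a₂ := Nat.dvd_antisymm
    (h₁.dvd_of_dvd_mul_right (Dvd.intro b₂ h)) (h₂.dvd_of_dvd_mul_right (Dvd.intro b₁ h.symm))
  subst ha
  refine ⟨rfl, Nat.dvd_antisymm ?_ ?_⟩
  · exact h₁.symm.dvd_of_dvd_mul_left (Dvd.intro_left a₁ h.symm)
  · exact h₂.symm.dvd_of_dvd_mul_left (Dvd.intro_left a₁ h)

lemma pow_div_mul_pow_div_pow {α : Type*} [CommMonoid α] (a b : α) {n m K : ℕ} (hn : K ∣ n)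
    (hm : K ∣ m) : (a ^ (n / K) * b ^ (m / K)) ^ K = a ^ n * b ^ m := by
  rw [mul_pow, ← pow_mul, ← pow_mul, Nat.div_mul_cancel hn, Nat.div_mul_cancel hm]

lemma exists_pow_le_and_pow_pred_le_abs_cross {n m K a₁ b₁ a₂ b₂ : ℕ} (hn : n ≠ 0) (hm : m ≠ 0)
    (hK : K ≠ 0) (hKn : K ∣ n) (hKm : K ∣ m) (h₁ : a₁.Coprime b₁) (h₂ : a₂.Coprime b₂)
    (hne : (a₁, b₁) ≠ (a₂, b₂)) :
    ∃ M : ℕ, (a₁ : ℝ) ^ n * (b₂ : ℝ) ^ m ≤ (M : ℝ) ^ K ∧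
      (M : ℝ) ^ (K - 1) ≤ |(a₁ : ℝ) ^ n * (b₂ : ℝ) ^ m - (a₂ : ℝ) ^ n * (b₁ : ℝ) ^ m| := by
  set x := a₁ ^ (n / K) * b₂ ^ (m / K)
  set y := a₂ ^ (n / K) * b₁ ^ (m / K)
  have hx : (x : ℝ) ^ K = (a₁ : ℝ) ^ n * (b₂ : ℝ) ^ m := by
    push_cast [x]; exact pow_div_mul_pow_div_pow _ _ hKn hKm
  have hy : (y : ℝ) ^ K = (a₂ : ℝ) ^ n * (b₁ : ℝ) ^ m := by
    push_cast [y]; exact pow_div_mul_pow_div_pow _ _ hKn hKm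
  have hxy : x ≠ y := by
    intro h
    have hcross : a₁ ^ n * b₂ ^ m = a₂ ^ n * b₁ ^ m := by
      rw [← pow_div_mul_pow_div_pow a₁ b₂ hKn hKm, ← pow_div_mul_pow_div_pow a₂ b₁ hKn hKm]
      exact congrArg (· ^ K) h
    obtain ⟨ha, hb⟩ := (h₁.pow n m).eq_of_mul_eq_mul (h₂.pow n m) hcross
    exact hne (by rw [Nat.pow_left_injective hn ha, Nat.pow_left_injective hm hb])
  refine ⟨max x y, ?_, ?_⟩
  · rw [← hx]
    gcongr
    exact_mod_cast le_max_left x y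
  · rw [← hx, ← hy]
    exact pow_pred_max_le_abs_pow_sub_pow hK hxy

lemma max_le_two_mul_min_of_half_lt_div_lt_two {A B : ℝ} (hB : 0 < B) (hl : 1 / 2 < A / B)
    (hr : A / B < 2) : max A B ≤ 2 * min A B := by
  rw [lt_div_iff₀ hB] at hl
  rw [div_lt_iff₀ hB] at hr
  rcases le_total A B with h | h
  · rw [max_eq_right h, min_eq_left h]; linarith
  · rw [max_eq_left h, min_eq_right h]; linarith

lemma sqrt_sq_add_sq_le (A B : ℝ) : √(A ^ 2 + B ^ 2) ≤ √2 * max |A| |B| := by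
  rw [← sqrt_sq ((abs_nonneg A).trans (le_max_left _ _)), ← sqrt_mul zero_le_two]
  apply sqrt_le_sqrt
  have hA : A ^ 2 ≤ max |A| |B| ^ 2 := by
    rw [← sq_abs]; gcongr; exact le_max_left _ _
  have hB : B ^ 2 ≤ max |A| |B| ^ 2 := by
    rw [← sq_abs]; gcongr; exact le_max_right _ _
  linarith

lemma pow_pred_le_mul_pow_pred {t M C : ℝ} {K : ℕ} (hK : K ≠ 0) (ht : 0 < t) (hM : 0 ≤ M)
    (hC : 1 ≤ C) (h : t ^ K ≤ C * M ^ K) : t ^ (K - 1) ≤ C * M ^ (K - 1) := by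
  rcases le_or_gt t M with htM | hMt
  · calc t ^ (K - 1) ≤ M ^ (K - 1) := by gcongr
      _ ≤ C * M ^ (K - 1) := le_mul_of_one_le_left (by positivity) hC
  · refine le_of_mul_le_mul_right ?_ ht
    calc t ^ (K - 1) * t = t ^ K := pow_sub_one_mul hK t
      _ ≤ C * M ^ K := h
      _ = C * M ^ (K - 1) * M := by rw [mul_assoc, pow_sub_one_mul hK]
      _ ≤ C * M ^ (K - 1) * t := by gcongr

lemma rpow_neg_inv_mul_self_le {P M C : ℝ} {K : ℕ} (hK : K ≠ 0) (hP : 0 < P) (hM : 0 ≤ M)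
    (hC : 1 ≤ C) (h : P ≤ C * M ^ K) : P ^ (-1 / K : ℝ) * P ≤ C * M ^ (K - 1) := by
  set t := P ^ (K⁻¹ : ℝ)
  have ht : 0 < t := rpow_pos_of_pos hP _
  have htK : t ^ K = P := rpow_inv_natCast_pow hP.le hK
  have hinv : P ^ (-1 / K : ℝ) = t⁻¹ := by rw [neg_div, one_div, rpow_neg hP.le]
  rw [hinv, ← htK, ← mul_pow_sub_one hK t, inv_mul_cancel_left₀ ht.ne']
  exact pow_pred_le_mul_pow_pred hK ht hM hC (htK ▸ h)

lemma one_div_eight_mul_rpow_le_abs_cross_div {A₁ B₁ A₂ B₂ M : ℝ} {K : ℕ} (hK : K ≠ 0)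
    (hB₁ : 0 < B₁) (hB₂ : 0 < B₂) (h₁l : 1 / 2 < A₁ / B₁) (h₁r : A₁ / B₁ < 2)
    (h₂l : 1 / 2 < A₂ / B₂) (h₂r : A₂ / B₂ < 2) (hM : 0 ≤ M) (hMK : A₁ * B₂ ≤ M ^ K)
    (hD : M ^ (K - 1) ≤ |A₁ * B₂ - A₂ * B₁|) :
    1 / 8 * max A₁ B₁ ^ (-1 / K : ℝ) * max A₂ B₂ ^ (-1 / K : ℝ) ≤
      |A₁ * B₂ - A₂ * B₁| / (√(A₁ ^ 2 + B₁ ^ 2) * √(A₂ ^ 2 + B₂ ^ 2)) := by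
  have hA₁ : 0 < A₁ := by have := (lt_div_iff₀ hB₁).1 h₁l; linarith
  have hA₂ : 0 < A₂ := by have := (lt_div_iff₀ hB₂).1 h₂l; linarith
  have hm₁ := max_le_two_mul_min_of_half_lt_div_lt_two hB₁ h₁l h₁r
  have hm₂ := max_le_two_mul_min_of_half_lt_div_lt_two hB₂ h₂l h₂r
  set P := max A₁ B₁ * max A₂ B₂
  have hP : 0 < P := by positivity
  have hPM : P ≤ 4 * M ^ K := calc
    P ≤ (2 * A₁) * (2 * B₂) := mul_le_mul (hm₁.trans (by gcongr; exact min_le_left _ _))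
      (hm₂.trans (by gcongr; exact min_le_right _ _)) (by positivity) (by positivity)
    _ ≤ 4 * M ^ K := by linarith
  have hS : √(A₁ ^ 2 + B₁ ^ 2) * √(A₂ ^ 2 + B₂ ^ 2) ≤ 2 * P := calc
    _ ≤ (√2 * max A₁ B₁) * (√2 * max A₂ B₂) := by
      have h₁ := sqrt_sq_add_sq_le A₁ B₁
      have h₂ := sqrt_sq_add_sq_le A₂ B₂
      rw [abs_of_pos hA₁, abs_of_pos hB₁] at h₁
      rw [abs_of_pos hA₂, abs_of_pos hB₂] at h₂
      gcongr
    _ = 2 * P := by rw [mul_mul_mul_comm, mul_self_sqrt zero_le_two]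
  rw [mul_assoc, ← mul_rpow (by positivity) (by positivity)]
  calc 1 / 8 * P ^ (-1 / K : ℝ) = P ^ (-1 / K : ℝ) * P / (8 * P) := by field_simp
    _ ≤ 4 * M ^ (K - 1) / (8 * P) := by
      gcongr ?_ / _; exact rpow_neg_inv_mul_self_le hK hP hM (by norm_num) hPM
    _ = M ^ (K - 1) / (2 * P) := by field_simp; ring
    _ ≤ |A₁ * B₂ - A₂ * B₁| / (√(A₁ ^ 2 + B₁ ^ 2) * √(A₂ ^ 2 + B₂ ^ 2)) :=
      div_le_div₀ (abs_nonneg _) hD (by positivity) hS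

theorem stmt16 (n m : ℕ) (hn : 1 ≤ n) (hm : 1 ≤ m) (hk : 2 ≤ Nat.gcd n m) :
    ∃ c : ℝ, 0 < c ∧ ∀ a₁ b₁ a₂ b₂ : ℕ,
      1 ≤ a₁ → 1 ≤ b₁ → 1 ≤ a₂ → 1 ≤ b₂ →
      Nat.Coprime a₁ b₁ → Nat.Coprime a₂ b₂ → (a₁, b₁) ≠ (a₂, b₂) →
      (1 : ℝ) / 2 < (a₁ : ℝ) ^ n / (b₁ : ℝ) ^ m → (a₁ : ℝ) ^ n / (b₁ : ℝ) ^ m < 2 →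
      (1 : ℝ) / 2 < (a₂ : ℝ) ^ n / (b₂ : ℝ) ^ m → (a₂ : ℝ) ^ n / (b₂ : ℝ) ^ m < 2 →
      c * ((max (a₁ ^ n) (b₁ ^ m) : ℕ) : ℝ) ^ (-(1 : ℝ) / (Nat.gcd n m : ℝ)) *
          ((max (a₂ ^ n) (b₂ ^ m) : ℕ) : ℝ) ^ (-(1 : ℝ) / (Nat.gcd n m : ℝ)) ≤
        |(a₁ : ℝ) ^ n * (b₂ : ℝ) ^ m - (a₂ : ℝ) ^ n * (b₁ : ℝ) ^ m| /
          (Real.sqrt ((a₁ : ℝ) ^ (2 * n) + (b₁ : ℝ) ^ (2 * m)) *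
            Real.sqrt ((a₂ : ℝ) ^ (2 * n) + (b₂ : ℝ) ^ (2 * m))) := by
  have hK : Nat.gcd n m ≠ 0 := by omega
  refine ⟨1 / 8, by norm_num, fun a₁ b₁ a₂ b₂ _ hb₁ _ hb₂ hc₁ hc₂ hne h₁l h₁r h₂l h₂r => ?_⟩
  obtain ⟨M, hMK, hD⟩ := exists_pow_le_and_pow_pred_le_abs_cross (by omega) (by omega) hK
    (Nat.gcd_dvd_left n m) (Nat.gcd_dvd_right n m) hc₁ hc₂ hne
  simp only [Nat.cast_max, Nat.cast_pow, pow_mul']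
  exact one_div_eight_mul_rpow_le_abs_cross_div hK (by positivity) (by positivity)
    h₁l h₁r h₂l h₂r M.cast_nonneg hMK hD
end

section
/- Let n, m, p ∈ ℕ with either n = m = p = 1 or gcd(n,m) ≥ 2, and let ψ be a decreasing positive function. Let f be a dimension function such that r^{−2}f(r) is monotonic, and set g(r) = r^{−1}f(r). If ∑_{(a,b)∈ℕ²} g(ψ(h_{a,b})/h_{a,b}) · h_{a,b}^{1/p} < ∞, where h_{a,b} = max(aⁿ,bᵐ), then the Hausdorff f-measure of the set W_{n,m}^p(ψ) of (x,y) ∈ [0,1)² satisfying |aⁿx + bᵐy − cᵖ| < ψ(h_{a,b}) for infinitely many (a,b,c) is zero. -/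
open MeasureTheory
open scoped ENNReal

/-!
Hausdorff–Cantelli. Put `H = max (a ^ n, b ^ m)` and `δ = ψ H / H`. Only `c ≤ (2 + ψ 0) H^(1/p)`
give a nonempty strip `|a ^ n x + b ^ m y - c ^ p| < ψ H` in `[0, 1)²`, and each such strip is
covered by `4 (⌊1/δ⌋ + 1)` squares of side `δ`: cutting it into columns of width `δ` along the
coordinate with the smaller coefficient, each column meets it in height `< 3 δ`. So the squares
attached to `(a, b)` number `≲ H^(1/p) / δ` and contribute `≲ f(δ)/δ · H^(1/p)` to the `f`-sum.
A point of the limsup set lies in the squares of infinitely many `(a, b)`, so it is covered by the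
squares of the tail of a convergent series, whose `f`-sums tend to `0`.
-/

open Filter Metric Set Topology

theorem MeasureTheory.Measure.mkMetric_setOf_infinite_eq_zero {X ι κ : Type*} [EMetricSpace X]
    [MeasurableSpace X] [BorelSpace X] [Countable ι] (m : ℝ≥0∞ → ℝ≥0∞) {S : ι → Finset κ}
    {U : ι → κ → Set X} {r : ι → ℝ≥0∞} (hr : Tendsto r Filter.cofinite (𝓝 0))
    (hU : ∀ i, ∀ k ∈ S i, ediam (U i k) ≤ r i)
    (hm : ∑' i, ∑ k ∈ S i, m (ediam (U i k)) ≠ ∞) :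
    Measure.mkMetric m {x | {i | ∃ k ∈ S i, x ∈ U i k}.Infinite} = 0 := by
  have hR : Tendsto (fun F : Finset ι => ⨆ i ∉ F, r i) atTop (𝓝 0) := by
    refine ENNReal.tendsto_nhds_zero.2 fun ε hε => ?_
    have hfin := Filter.eventually_cofinite.1 (hr.eventually (eventually_le_nhds hε))
    filter_upwards [eventually_ge_atTop hfin.toFinset] with F hF
    refine iSup₂_le fun i hi => not_not.1 fun h => hi (hF (hfin.mem_toFinset.2 h))
  have hle := Measure.mkMetric_le_liminf_tsum {x | {i | ∃ k ∈ S i, x ∈ U i k}.Infinite} _ hR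
    (fun F (p : Σ i : {i // i ∉ F}, S i.1) => U p.1 p.2)
    (Eventually.of_forall fun F p =>
      (hU _ _ p.2.2).trans (le_iSup₂ (f := fun i _ => r i) p.1.1 p.1.2))
    (Eventually.of_forall fun F x (hx : Set.Infinite _) => by
      obtain ⟨i, hi, hiF⟩ := (hx.sdiff F.finite_toSet).nonempty
      obtain ⟨k, hk, hxk⟩ := hi
      exact mem_iUnion.2 ⟨⟨⟨i, hiF⟩, ⟨k, hk⟩⟩, hxk⟩) m
  refine le_antisymm (hle.trans_eq ?_) zero_le
  simp only [ENNReal.tsum_sigma', fun F (i : {i // i ∉ F}) =>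
    Finset.tsum_subtype (S i.1) (fun k => m (ediam (U i k)))]
  exact (ENNReal.tendsto_tsum_compl_atTop_zero hm).liminf_eq

def square (u v δ : ℝ) : Set (ℝ × ℝ) := Icc u (u + δ) ×ˢ Icc v (v + δ)

theorem ediam_square_le (u v δ : ℝ) : ediam (square u v δ) ≤ ENNReal.ofReal δ := by
  refine ediam_le fun p hp q hq => ?_
  rw [Prod.edist_eq, edist_dist, edist_dist]
  refine max_le (ENNReal.ofReal_le_ofReal ?_) (ENNReal.ofReal_le_ofReal ?_)
  · simpa using Real.dist_le_of_mem_Icc hp.1 hq.1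
  · simpa using Real.dist_le_of_mem_Icc hp.2 hq.2

theorem mem_square_iff {u v δ x y : ℝ} (hδ : 0 < δ) :
    (x, y) ∈ square (u * δ) (v * δ) δ ↔ u ≤ x / δ ∧ x / δ ≤ u + 1 ∧ v ≤ y / δ ∧ y / δ ≤ v + 1 := by
  simp only [square, mem_prod, mem_Icc, le_div_iff₀ hδ, div_le_iff₀ hδ, add_mul, one_mul,
    and_assoc]

/-- The `o`-th of the four `δ`-squares above column `j` that cover the strip
`|t * (x / δ) + y / δ - s| < 1` for `0 ≤ t ≤ 1`. -/
noncomputable def tile (t s δ : ℝ) (j o : ℕ) : Set (ℝ × ℝ) :=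
  square (j * δ) ((⌊s - 1 - t * (j + 1)⌋ + o : ℤ) * δ) δ

theorem exists_mem_tile {t s δ x y : ℝ} (ht₀ : 0 ≤ t) (ht₁ : t ≤ 1) (hδ : 0 < δ) (hx : 0 ≤ x)
    (h : |t * (x / δ) + y / δ - s| < 1) : ∃ o < 4, (x, y) ∈ tile t s δ ⌊x / δ⌋₊ o := by
  set j := ⌊x / δ⌋₊
  set L := s - 1 - t * (j + 1)
  have hj : (j : ℝ) ≤ x / δ := Nat.floor_le (div_nonneg hx hδ.le)
  have hj' : x / δ < j + 1 := Nat.lt_floor_add_one _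
  obtain ⟨hlo, hhi⟩ := abs_lt.1 h
  have hLy : L ≤ y / δ := by nlinarith
  have hyL : y / δ < L + 3 := by nlinarith
  have hk₀ : ⌊L⌋ ≤ ⌊y / δ⌋ := Int.floor_mono hLy
  have hk₄ : ⌊y / δ⌋ < ⌊L⌋ + 4 := by
    rw [Int.floor_lt]; push_cast; linarith [Int.lt_floor_add_one L]
  refine ⟨(⌊y / δ⌋ - ⌊L⌋).toNat, by omega, ?_⟩
  rw [tile, show ⌊L⌋ + ((⌊y / δ⌋ - ⌊L⌋).toNat : ℤ) = ⌊y / δ⌋ by omega, mem_square_iff hδ]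
  exact ⟨hj, hj'.le, Int.floor_le _, (Int.lt_floor_add_one _).le⟩

/-- With `s = γ / ε` and `δ = ε / max A B`, these tiles cover the strip
`|A * x + B * y - γ| < ε` in `[0, 1)²`; columns run along the coordinate with the smaller
coefficient. -/
noncomputable def stripTile (A B s δ : ℝ) (j o : ℕ) : Set (ℝ × ℝ) :=
  if A ≤ B then tile (A / B) s δ j o else Prod.swap ⁻¹' tile (B / A) s δ j o

theorem ediam_stripTile_le (A B s δ : ℝ) (j o : ℕ) :
    ediam (stripTile A B s δ j o) ≤ ENNReal.ofReal δ := by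
  unfold stripTile tile square
  split_ifs
  · exact ediam_square_le _ _ _
  · rw [preimage_swap_prod]; exact ediam_square_le _ _ _

theorem exists_mem_tile_of_abs_lt {A B γ ε x y : ℝ} (hA : 0 < A) (hAB : A ≤ B) (hε : 0 < ε)
    (hx₀ : 0 ≤ x) (hx₁ : x < 1) (h : |A * x + B * y - γ| < ε) :
    ∃ j ≤ ⌊B / ε⌋₊, ∃ o < 4, (x, y) ∈ tile (A / B) (γ / ε) (ε / B) j o := by
  have hB : 0 < B := hA.trans_le hAB
  have hrw : A / B * (x / (ε / B)) + y / (ε / B) - γ / ε = (A * x + B * y - γ) / ε := by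
    field_simp
  obtain ⟨o, ho, hmem⟩ := exists_mem_tile (div_nonneg hA.le hB.le) ((div_le_one hB).2 hAB)
    (div_pos hε hB) hx₀ (by rwa [hrw, abs_div, abs_of_pos hε, div_lt_one hε])
  refine ⟨_, Nat.floor_le_floor ?_, o, ho, hmem⟩
  rw [div_div_eq_mul_div, mul_div_assoc]
  exact mul_le_of_le_one_left (div_nonneg hB.le hε.le) hx₁.le

theorem exists_mem_stripTile {A B γ ε x y : ℝ} (hA : 0 < A) (hB : 0 < B) (hε : 0 < ε)
    (hx : x ∈ Ico 0 1) (hy : y ∈ Ico 0 1) (h : |A * x + B * y - γ| < ε) :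
    ∃ j ≤ ⌊max A B / ε⌋₊, ∃ o < 4, (x, y) ∈ stripTile A B (γ / ε) (ε / max A B) j o := by
  rcases le_or_gt A B with hAB | hBA
  · rw [max_eq_right hAB]
    obtain ⟨j, hj, o, ho, hmem⟩ := exists_mem_tile_of_abs_lt hA hAB hε hx.1 hx.2 h
    exact ⟨j, hj, o, ho, by rwa [stripTile, if_pos hAB]⟩
  · rw [max_eq_left hBA.le]
    obtain ⟨j, hj, o, ho, hmem⟩ := exists_mem_tile_of_abs_lt hB hBA.le hε hy.1 hy.2
      (by rwa [add_comm])
    exact ⟨j, hj, o, ho, by rwa [stripTile, if_neg hBA.not_ge, mem_preimage, Prod.swap_prod_mk]⟩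

theorem le_mul_rpow_one_div_of_pow_le {c K H : ℝ} {p : ℕ} (hp : p ≠ 0) (hc : 0 ≤ c) (hK : 1 ≤ K)
    (hH : 0 ≤ H) (h : c ^ p ≤ K * H) : c ≤ K * H ^ (1 / (p : ℝ)) := by
  rw [← pow_le_pow_iff_left₀ hc (by positivity) hp, mul_pow, one_div,
    Real.rpow_inv_natCast_pow hH hp]
  exact h.trans (by gcongr; exact le_self_pow₀ hK hp)

theorem Monotone.nonneg_of_tendsto_nhdsGT_zero {f : ℝ → ℝ} (hf : Monotone f)
    (h₀ : Tendsto f (𝓝[>] 0) (𝓝 0)) {r : ℝ} (hr : 0 < r) : 0 ≤ f r :=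
  _root_.le_of_tendsto h₀ (eventually_of_mem (Ioo_mem_nhdsGT hr) fun _ hs => hf hs.2.le)

section Diophantine

variable {n m p : ℕ} {ψ : ℕ → ℝ}

variable (n m) in
def height (ab : ℕ × ℕ) : ℕ := max ((ab.1 + 1) ^ n) ((ab.2 + 1) ^ m)

variable (n m ψ) in
noncomputable def side (ab : ℕ × ℕ) : ℝ := ψ (height n m ab) / height n m ab

variable (n m p ψ) in
noncomputable def diophantineTile (ab : ℕ × ℕ) (k : ℕ × ℕ × ℕ) : Set (ℝ × ℝ) :=
  stripTile (((ab.1 : ℝ) + 1) ^ n) (((ab.2 : ℝ) + 1) ^ m) ((k.1 : ℝ) ^ p / ψ (height n m ab))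
    (side n m ψ ab) k.2.1 k.2.2

variable (n m p ψ) in
/-- Indices `(c, j, o)`; the range of `c` is forced by `c ^ p < 2 * height + ψ 0`. -/
noncomputable def tileIndices (ab : ℕ × ℕ) : Finset (ℕ × ℕ × ℕ) :=
  Finset.range (⌊(2 + ψ 0) * (height n m ab : ℝ) ^ (1 / (p : ℝ))⌋₊ + 1) ×ˢ
    Finset.range (⌊(side n m ψ ab)⁻¹⌋₊ + 1) ×ˢ Finset.range 4

theorem height_cast (ab : ℕ × ℕ) :
    (height n m ab : ℝ) = max (((ab.1 : ℝ) + 1) ^ n) (((ab.2 : ℝ) + 1) ^ m) := by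
  simp [height]

theorem one_le_height (ab : ℕ × ℕ) : 1 ≤ height n m ab :=
  le_max_of_le_left (Nat.one_le_pow _ _ ab.1.succ_pos)

theorem max_lt_height (hn : n ≠ 0) (hm : m ≠ 0) (ab : ℕ × ℕ) : max ab.1 ab.2 < height n m ab :=
  max_lt_max (Nat.lt_of_lt_of_le ab.1.lt_succ_self (Nat.le_self_pow hn _))
    (Nat.lt_of_lt_of_le ab.2.lt_succ_self (Nat.le_self_pow hm _))

theorem tendsto_height_cofinite (hn : n ≠ 0) (hm : m ≠ 0) :
    Tendsto (height n m) cofinite atTop := by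
  refine tendsto_atTop.2 fun N => eventually_cofinite.2 ?_
  refine ((finite_Iio N).prod (finite_Iio N)).subset fun ab hab => ?_
  have := max_lt_height hn hm ab
  have hab : height n m ab < N := not_le.1 hab
  exact ⟨by simp; omega, by simp; omega⟩

theorem side_pos (hψ : ∀ q, 0 < ψ q) (ab : ℕ × ℕ) : 0 < side n m ψ ab :=
  div_pos (hψ _) (by exact_mod_cast one_le_height ab)

theorem side_le (hψ' : Antitone ψ) (ab : ℕ × ℕ) :
    side n m ψ ab ≤ ψ 0 / height n m ab :=
  div_le_div_of_nonneg_right (hψ' (Nat.zero_le _)) (Nat.cast_nonneg _)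

theorem tendsto_side_cofinite (hn : n ≠ 0) (hm : m ≠ 0) (hψ : ∀ q, 0 < ψ q) (hψ' : Antitone ψ) :
    Tendsto (side n m ψ) cofinite (𝓝 0) :=
  tendsto_of_tendsto_of_tendsto_of_le_of_le tendsto_const_nhds
    (tendsto_const_nhds.div_atTop
      (tendsto_natCast_atTop_atTop.comp (tendsto_height_cofinite hn hm)))
    (fun ab => (side_pos hψ ab).le) (side_le hψ')

theorem exists_mem_diophantineTile (hp : p ≠ 0) (hψ : ∀ q, 0 < ψ q) (hψ' : Antitone ψ)
    {a b c : ℕ} {x y : ℝ} (hx : x ∈ Ico 0 1) (hy : y ∈ Ico 0 1)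
    (h : |((a + 1 : ℕ) : ℝ) ^ n * x + ((b + 1 : ℕ) : ℝ) ^ m * y - (c : ℝ) ^ p| <
      ψ (height n m (a, b))) :
    ∃ k ∈ tileIndices n m p ψ (a, b), k.1 = c ∧ (x, y) ∈ diophantineTile n m p ψ (a, b) k := by
  push_cast at h
  have hH : (height n m (a, b) : ℝ) = max (((a : ℝ) + 1) ^ n) (((b : ℝ) + 1) ^ m) :=
    height_cast (a, b)
  have hside : side n m ψ (a, b) =
      ψ (height n m (a, b)) / max (((a : ℝ) + 1) ^ n) (((b : ℝ) + 1) ^ m) := by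
    rw [side, hH]
  obtain ⟨j, hj, o, ho, hmem⟩ :=
    exists_mem_stripTile (by positivity) (by positivity) (hψ _) hx hy h
  have hcp : (c : ℝ) ^ p ≤ (2 + ψ 0) * height n m (a, b) := by
    have hA : ((a : ℝ) + 1) ^ n ≤ height n m (a, b) := hH ▸ le_max_left _ _
    have hB : ((b : ℝ) + 1) ^ m ≤ height n m (a, b) := hH ▸ le_max_right _ _
    have hH1 : (1 : ℝ) ≤ height n m (a, b) := by exact_mod_cast one_le_height (a, b)
    have := hψ' (Nat.zero_le (height n m (a, b)))
    have := (abs_lt.1 h).1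
    nlinarith [hx.1, hx.2, hy.1, hy.2, hψ 0]
  refine ⟨(c, j, o), ?_, rfl, by rwa [diophantineTile, hside]⟩
  simp only [tileIndices, Finset.mem_product, Finset.mem_range]
  refine ⟨Nat.lt_succ_of_le (Nat.le_floor ?_), Nat.lt_succ_of_le (by rwa [hside, inv_div]), ho⟩
  exact le_mul_rpow_one_div_of_pow_le hp c.cast_nonneg (by linarith [hψ 0]) (Nat.cast_nonneg _) hcp

theorem card_tileIndices_le (hψ : ∀ q, 0 < ψ q) (hψ' : Antitone ψ) (ab : ℕ × ℕ) :
    ((tileIndices n m p ψ ab).card : ℝ) ≤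
      8 * (2 + ψ 0) * (1 + ψ 0) * (height n m ab : ℝ) ^ (1 / (p : ℝ)) / side n m ψ ab := by
  set X := (2 + ψ 0) * (height n m ab : ℝ) ^ (1 / (p : ℝ))
  set δ := side n m ψ ab
  have hH : (1 : ℝ) ≤ height n m ab := by exact_mod_cast one_le_height ab
  have hX : 1 ≤ X := one_le_mul_of_one_le_of_one_le (by linarith [hψ 0])
    (Real.one_le_rpow hH (by positivity))
  have hδ : 0 < δ := side_pos hψ ab
  have hδψ : δ ≤ ψ 0 := (side_le hψ' ab).trans (div_le_self (hψ 0).le hH)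
  have hc : (⌊X⌋₊ : ℝ) + 1 ≤ 2 * X := by linarith [Nat.floor_le (by linarith : 0 ≤ X)]
  have hj : (⌊δ⁻¹⌋₊ : ℝ) + 1 ≤ (1 + ψ 0) / δ := by
    have h₁ : (⌊δ⁻¹⌋₊ : ℝ) ≤ δ⁻¹ := Nat.floor_le (inv_nonneg.2 hδ.le)
    have h₂ : 1 ≤ ψ 0 / δ := (one_le_div hδ).2 hδψ
    rw [add_div, one_div]
    linarith
  calc ((tileIndices n m p ψ ab).card : ℝ) = (⌊X⌋₊ + 1) * ((⌊δ⁻¹⌋₊ + 1) * 4) := by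
        simp [tileIndices, Finset.card_product, X, δ]
    _ ≤ (2 * X) * ((1 + ψ 0) / δ * 4) := by gcongr
    _ = _ := by ring

theorem sum_tileIndices_le {f : ℝ → ℝ} (hf : Monotone f) (hf₀ : ∀ r, 0 < r → 0 ≤ f r)
    (hψ : ∀ q, 0 < ψ q) (hψ' : Antitone ψ) (ab : ℕ × ℕ) :
    ∑ k ∈ tileIndices n m p ψ ab,
        ENNReal.ofReal (f (ediam (diophantineTile n m p ψ ab k)).toReal) ≤
      ENNReal.ofReal (8 * (2 + ψ 0) * (1 + ψ 0) *
        (f (side n m ψ ab) / side n m ψ ab * (height n m ab : ℝ) ^ (1 / (p : ℝ)))) := by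
  have hδ := side_pos (n := n) (m := m) hψ ab
  have hterm : ∀ k, ENNReal.ofReal (f (ediam (diophantineTile n m p ψ ab k)).toReal) ≤
      ENNReal.ofReal (f (side n m ψ ab)) := fun k =>
    ENNReal.ofReal_le_ofReal (hf (ENNReal.toReal_le_of_le_ofReal hδ.le (ediam_stripTile_le ..)))
  refine (Finset.sum_le_card_nsmul _ _ _ fun k _ => hterm k).trans ?_
  rw [nsmul_eq_mul, ← ENNReal.ofReal_natCast, ← ENNReal.ofReal_mul (Nat.cast_nonneg _)]
  refine ENNReal.ofReal_le_ofReal ?_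
  calc ((tileIndices n m p ψ ab).card : ℝ) * f (side n m ψ ab)
      ≤ 8 * (2 + ψ 0) * (1 + ψ 0) * (height n m ab : ℝ) ^ (1 / (p : ℝ)) / side n m ψ ab *
          f (side n m ψ ab) := by
        gcongr
        · exact hf₀ _ hδ
        · exact card_tileIndices_le hψ hψ' ab
    _ = _ := by ring

variable (n m p ψ) in
def approximableSet : Set (ℝ × ℝ) :=
  {xy | xy.1 ∈ Ico 0 1 ∧ xy.2 ∈ Ico 0 1 ∧
    {abc : ℕ × ℕ × ℕ | 1 ≤ abc.1 ∧ 1 ≤ abc.2.1 ∧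
      |(abc.1 : ℝ) ^ n * xy.1 + (abc.2.1 : ℝ) ^ m * xy.2 - (abc.2.2 : ℝ) ^ p| <
        ψ (max (abc.1 ^ n) (abc.2.1 ^ m))}.Infinite}

theorem approximableSet_subset (hp : p ≠ 0) (hψ : ∀ q, 0 < ψ q) (hψ' : Antitone ψ) :
    approximableSet n m p ψ ⊆
      {xy | {ab | ∃ k ∈ tileIndices n m p ψ ab, xy ∈ diophantineTile n m p ψ ab k}.Infinite} := by
  rintro ⟨x, y⟩ ⟨hx, hy, hT⟩ hE
  refine hT ((hE.biUnion fun ab _ => (tileIndices n m p ψ ab).finite_toSet.image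
    fun k => (ab.1 + 1, ab.2 + 1, k.1)).subset ?_)
  rintro ⟨a, b, c⟩ ⟨ha, hb, h⟩
  obtain ⟨a, rfl⟩ := Nat.exists_eq_add_of_le' ha
  obtain ⟨b, rfl⟩ := Nat.exists_eq_add_of_le' hb
  obtain ⟨k, hk, rfl, hmem⟩ := exists_mem_diophantineTile hp hψ hψ' hx hy h
  exact mem_iUnion₂.2 ⟨(a, b), ⟨k, hk, hmem⟩, k, hk, rfl⟩

end Diophantine

theorem stmt19_general (n m p : ℕ) (hn : 1 ≤ n) (hm : 1 ≤ m) (hp : 1 ≤ p)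
    (ψ : ℕ → ℝ) (hψpos : ∀ q, 0 < ψ q) (hψanti : Antitone ψ)
    (f : ℝ → ℝ) (hfmono : Monotone f) (hf0 : Filter.Tendsto f (nhdsWithin 0 (Set.Ioi 0)) (nhds 0))
    (hsum : Summable (fun ab : ℕ × ℕ =>
      (f (ψ (max ((ab.1 + 1) ^ n) ((ab.2 + 1) ^ m)) /
          ((max ((ab.1 + 1) ^ n) ((ab.2 + 1) ^ m) : ℕ) : ℝ)) /
        (ψ (max ((ab.1 + 1) ^ n) ((ab.2 + 1) ^ m)) /
          ((max ((ab.1 + 1) ^ n) ((ab.2 + 1) ^ m) : ℕ) : ℝ))) *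
        ((max ((ab.1 + 1) ^ n) ((ab.2 + 1) ^ m) : ℕ) : ℝ) ^ (1 / (p : ℝ)))) :
    Measure.mkMetric (fun r : ℝ≥0∞ => ENNReal.ofReal (f r.toReal))
      {xy : ℝ × ℝ | xy.1 ∈ Set.Ico (0 : ℝ) 1 ∧ xy.2 ∈ Set.Ico (0 : ℝ) 1 ∧
        {abc : ℕ × ℕ × ℕ | 1 ≤ abc.1 ∧ 1 ≤ abc.2.1 ∧
          |(abc.1 : ℝ) ^ n * xy.1 + (abc.2.1 : ℝ) ^ m * xy.2 - (abc.2.2 : ℝ) ^ p| <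
            ψ (max (abc.1 ^ n) (abc.2.1 ^ m))}.Infinite} = 0 := by
  have hf : ∀ r, 0 < r → 0 ≤ f r := fun r => hfmono.nonneg_of_tendsto_nhdsGT_zero hf0
  have hC : 0 ≤ 8 * (2 + ψ 0) * (1 + ψ 0) := by have := hψpos 0; positivity
  have hterm : ∀ ab, 0 ≤ 8 * (2 + ψ 0) * (1 + ψ 0) *
      (f (side n m ψ ab) / side n m ψ ab * (height n m ab : ℝ) ^ (1 / (p : ℝ))) := by
    intro ab
    have hδ := side_pos (n := n) (m := m) hψpos ab
    exact mul_nonneg hC (mul_nonneg (div_nonneg (hf _ hδ) hδ.le) (by positivity))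
  have hcover :=
    (ENNReal.tsum_le_tsum fun ab => sum_tileIndices_le hfmono hf hψpos hψanti ab).trans_eq
      (ENNReal.ofReal_tsum_of_nonneg hterm (hsum.mul_left _)).symm
  refine measure_mono_null (approximableSet_subset (by omega) hψpos hψanti)
    (Measure.mkMetric_setOf_infinite_eq_zero _ ?_ (fun ab k _ => ediam_stripTile_le ..)
      (ne_top_of_le_ne_top ENNReal.ofReal_ne_top hcover))
  simpa using ENNReal.tendsto_ofReal (tendsto_side_cofinite (by omega) (by omega) hψpos hψanti)

theorem stmt19 (n m p : ℕ) (hn : 1 ≤ n) (hm : 1 ≤ m) (hp : 1 ≤ p)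
    (hcase : (n = 1 ∧ m = 1 ∧ p = 1) ∨ 2 ≤ Nat.gcd n m)
    (ψ : ℕ → ℝ) (hψpos : ∀ q, 0 < ψ q) (hψanti : Antitone ψ)
    (f : ℝ → ℝ) (hfmono : Monotone f) (hf0 : Filter.Tendsto f (nhdsWithin 0 (Set.Ioi 0)) (nhds 0))
    (hf2 : MonotoneOn (fun r => f r / r ^ 2) (Set.Ioi (0 : ℝ)) ∨
      AntitoneOn (fun r => f r / r ^ 2) (Set.Ioi (0 : ℝ)))
    (hsum : Summable (fun ab : ℕ × ℕ =>
      (f (ψ (max ((ab.1 + 1) ^ n) ((ab.2 + 1) ^ m)) /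
          ((max ((ab.1 + 1) ^ n) ((ab.2 + 1) ^ m) : ℕ) : ℝ)) /
        (ψ (max ((ab.1 + 1) ^ n) ((ab.2 + 1) ^ m)) /
          ((max ((ab.1 + 1) ^ n) ((ab.2 + 1) ^ m) : ℕ) : ℝ))) *
        ((max ((ab.1 + 1) ^ n) ((ab.2 + 1) ^ m) : ℕ) : ℝ) ^ (1 / (p : ℝ)))) :
    Measure.mkMetric (fun r : ℝ≥0∞ => ENNReal.ofReal (f r.toReal))
      {xy : ℝ × ℝ | xy.1 ∈ Set.Ico (0 : ℝ) 1 ∧ xy.2 ∈ Set.Ico (0 : ℝ) 1 ∧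
        {abc : ℕ × ℕ × ℕ | 1 ≤ abc.1 ∧ 1 ≤ abc.2.1 ∧
          |(abc.1 : ℝ) ^ n * xy.1 + (abc.2.1 : ℝ) ^ m * xy.2 - (abc.2.2 : ℝ) ^ p| <
            ψ (max (abc.1 ^ n) (abc.2.1 ^ m))}.Infinite} = 0 :=
  stmt19_general n m p hn hm hp ψ hψpos hψanti f hfmono hf0 hsum
end
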